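/- arXiv:1901.05134 — 7 statements merged into one kernel-verified Lean document; each statement's English description precedes it below -/
import Mathlib

section
/- Under Assumption 1, fix w ∈ ℝ^d, set g = ∇f(w) and H = ∇²f(w), fix any G ≥ ‖g‖, and set L = ((1/m)∑_{i=1}^m K_i)² + ((1/m)∑_{i=1}^m L_i)·G. Then for every p ∈ ℝ^d and every α ≥ 0: ‖∇f(w + αp)‖² ≤ ‖g‖² + 2α⟨p, Hg⟩ + α²L‖p‖². -/
open scoped RealInnerProductSpace

/-- The average function `f = (1/m) ∑ᵢ fᵢ`. -/
noncomputable def avgFun {d m : ℕ} (f : Fin m → EuclideanSpace ℝ (Fin d) → ℝ) :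
    EuclideanSpace ℝ (Fin d) → ℝ :=
  fun w => (1 / (m : ℝ)) * ∑ i, f i w

/-- The gradient `∇f` of the average function. -/
noncomputable def gradF {d m : ℕ} (f : Fin m → EuclideanSpace ℝ (Fin d) → ℝ)
    (w : EuclideanSpace ℝ (Fin d)) : EuclideanSpace ℝ (Fin d) :=
  gradient (avgFun f) w

/-- The Hessian `∇²f` of the average function, as a continuous linear map. -/
noncomputable def hessF {d m : ℕ} (f : Fin m → EuclideanSpace ℝ (Fin d) → ℝ)
    (w : EuclideanSpace ℝ (Fin d)) :
    EuclideanSpace ℝ (Fin d) →L[ℝ] EuclideanSpace ℝ (Fin d) :=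
  fderiv ℝ (gradient (avgFun f)) w

/-- The Hessian `∇²fᵢ` of a single function, as a continuous linear map. -/
noncomputable def hessI {d : ℕ} (g : EuclideanSpace ℝ (Fin d) → ℝ)
    (w : EuclideanSpace ℝ (Fin d)) :
    EuclideanSpace ℝ (Fin d) →L[ℝ] EuclideanSpace ℝ (Fin d) :=
  fderiv ℝ (gradient g) w

/-- The Lipschitz constant `L = ((1/m)∑Kᵢ)² + ((1/m)∑Lᵢ)·G`. -/
noncomputable def Lconst {m : ℕ} (K L : Fin m → ℝ) (G : ℝ) : ℝ :=
  ((1 / (m : ℝ)) * ∑ i, K i) ^ 2 + ((1 / (m : ℝ)) * ∑ i, L i) * G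

section Aux

variable {E : Type*} [NormedAddCommGroup E] [InnerProductSpace ℝ E] [CompleteSpace E]

/-- The inverse of `toDual` as a genuine `ℝ`-continuous linear map. -/
noncomputable def lowerDual (E : Type*) [NormedAddCommGroup E] [InnerProductSpace ℝ E]
    [CompleteSpace E] : StrongDual ℝ E →L[ℝ] E where
  toFun := fun φ => (InnerProductSpace.toDual ℝ E).symm φ
  map_add' := fun φ ψ => map_add _ _ _
  map_smul' := fun r φ => by
    simp only [RingHom.id_apply]
    simpa using (InnerProductSpace.toDual ℝ E).symm.map_smulₛₗ r φ
  cont := (InnerProductSpace.toDual ℝ E).symm.continuous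

lemma lowerDual_apply (φ : StrongDual ℝ E) :
    lowerDual E φ = (InnerProductSpace.toDual ℝ E).symm φ := rfl

lemma inner_lowerDual (φ : StrongDual ℝ E) (x : E) :
    ⟪lowerDual E φ, x⟫ = φ x := InnerProductSpace.toDual_symm_apply

lemma gradient_eq_lowerDual (f : E → ℝ) :
    gradient f = fun x => lowerDual E (fderiv ℝ f x) := rfl

lemma diff_fderiv_of_contDiff2 {f : E → ℝ} (hf : ContDiff ℝ 2 f) :
    Differentiable ℝ (fderiv ℝ f) :=
  (hf.fderiv_right (m := 1) (by norm_num)).differentiable (by norm_num)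

lemma diff_gradient_of_contDiff2 {f : E → ℝ} (hf : ContDiff ℝ 2 f) :
    Differentiable ℝ (gradient f) := by
  rw [gradient_eq_lowerDual]
  exact (lowerDual E).differentiable.comp (diff_fderiv_of_contDiff2 hf)

lemma hasFDerivAt_gradient {f : E → ℝ} (hf : ContDiff ℝ 2 f) (x : E) :
    HasFDerivAt (gradient f)
      ((lowerDual E).comp (fderiv ℝ (fderiv ℝ f) x)) x := by
  rw [gradient_eq_lowerDual]
  exact (lowerDual E).hasFDerivAt.comp x ((diff_fderiv_of_contDiff2 hf x).hasFDerivAt)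

lemma fderiv_gradient_eq {f : E → ℝ} (hf : ContDiff ℝ 2 f) (x : E) :
    fderiv ℝ (gradient f) x = (lowerDual E).comp (fderiv ℝ (fderiv ℝ f) x) :=
  (hasFDerivAt_gradient hf x).fderiv

lemma inner_fderiv_gradient_symm {f : E → ℝ} (hf : ContDiff ℝ 2 f) (x u v : E) :
    ⟪u, fderiv ℝ (gradient f) x v⟫ = ⟪v, fderiv ℝ (gradient f) x u⟫ := by
  have hsym : ∀ a b : E, fderiv ℝ (fderiv ℝ f) x a b = fderiv ℝ (fderiv ℝ f) x b a := by
    intro a b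
    exact second_derivative_symmetric
      (fun y => ((hf.differentiable (by norm_num)) y).hasFDerivAt)
      ((diff_fderiv_of_contDiff2 hf x).hasFDerivAt) a b
  have key : ∀ a b : E, ⟪a, lowerDual E (fderiv ℝ (fderiv ℝ f) x b)⟫
      = fderiv ℝ (fderiv ℝ f) x b a := by
    intro a b
    rw [real_inner_comm]
    exact inner_lowerDual _ _
  rw [fderiv_gradient_eq hf, ContinuousLinearMap.comp_apply, ContinuousLinearMap.comp_apply,
    key, key]
  exact hsym v u

end Aux

set_option maxHeartbeats 1000000 in
/-- **Quadratic upper bound along a search direction** (inequality (14) of the paper).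
Under Assumption 1, for any `p` and `α ≥ 0`,
`‖∇f(w + αp)‖² ≤ ‖∇f(w)‖² + 2α⟨p, ∇²f(w)∇f(w)⟩ + α²L‖p‖²`. -/
theorem stmt_2 {d m : ℕ} (hm : 0 < m)
    (f : Fin m → EuclideanSpace ℝ (Fin d) → ℝ)
    (hf : ∀ i, ContDiff ℝ 2 (f i))
    (K L : Fin m → ℝ) (hK : ∀ i, 0 < K i) (hL : ∀ i, 0 < L i)
    (hgrad : ∀ i (x y : EuclideanSpace ℝ (Fin d)),
      ‖gradient (f i) x - gradient (f i) y‖ ≤ K i * ‖x - y‖)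
    (hhess : ∀ i (x y : EuclideanSpace ℝ (Fin d)),
      ‖hessI (f i) x - hessI (f i) y‖ ≤ L i * ‖x - y‖)
    (w : EuclideanSpace ℝ (Fin d)) (G : ℝ) (hG : ‖gradF f w‖ ≤ G) :
    ∀ (p : EuclideanSpace ℝ (Fin d)) (α : ℝ), 0 ≤ α →
      ‖gradF f (w + α • p)‖ ^ 2
        ≤ ‖gradF f w‖ ^ 2 + 2 * α * ⟪p, hessF f w (gradF f w)⟫
          + α ^ 2 * Lconst K L G * ‖p‖ ^ 2 := by
  intro p α hα
  have hm' : (0:ℝ) < m := Nat.cast_pos.mpr hm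
  set c : ℝ := 1 / (m:ℝ) with hc
  have hc0 : 0 ≤ c := by positivity
  set Kb : ℝ := c * ∑ i, K i with hKb
  set Lb : ℝ := c * ∑ i, L i with hLb
  have hKb0 : 0 ≤ Kb := by
    apply mul_nonneg hc0
    exact Finset.sum_nonneg fun i _ => (hK i).le
  have hLb0 : 0 ≤ Lb := by
    apply mul_nonneg hc0
    exact Finset.sum_nonneg fun i _ => (hL i).le
  -- smoothness of the average
  have havg : ContDiff ℝ 2 (avgFun f) := by
    have : ContDiff ℝ 2 (fun w : EuclideanSpace ℝ (Fin d) => ∑ i, f i w) := ContDiff.sum fun i _ => hf i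
    exact contDiff_const.mul this
  have hdfi : ∀ i, Differentiable ℝ (f i) := fun i => (hf i).differentiable (by norm_num)
  have hdgi : ∀ i, Differentiable ℝ (gradient (f i)) :=
    fun i => diff_gradient_of_contDiff2 (hf i)
  -- the gradient of the average is the average of the gradients
  have hgradavg : ∀ x : EuclideanSpace ℝ (Fin d), gradient (avgFun f) x = c • ∑ i, gradient (f i) x := by
    intro x
    have h1 : HasFDerivAt (fun y : EuclideanSpace ℝ (Fin d) => ∑ i, f i y) (∑ i, fderiv ℝ (f i) x) x :=
      HasFDerivAt.fun_sum fun i _ => (hdfi i x).hasFDerivAt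
    have h2 : HasFDerivAt (avgFun f) (c • ∑ i, fderiv ℝ (f i) x) x := by
      have h' := h1.const_mul c
      have heq : avgFun f = fun y => c * ∑ i, f i y := by
        funext y; simp [avgFun, hc]
      rw [heq]; exact h'
    calc gradient (avgFun f) x = lowerDual (EuclideanSpace ℝ (Fin d)) (fderiv ℝ (avgFun f) x) := rfl
      _ = lowerDual (EuclideanSpace ℝ (Fin d)) (c • ∑ i, fderiv ℝ (f i) x) := by rw [h2.fderiv]
      _ = c • ∑ i, lowerDual (EuclideanSpace ℝ (Fin d)) (fderiv ℝ (f i) x) := by rw [map_smul, map_sum]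
      _ = c • ∑ i, gradient (f i) x := rfl
  have hfun : gradient (avgFun f) = fun y : EuclideanSpace ℝ (Fin d) => c • ∑ i, gradient (f i) y :=
    funext hgradavg
  -- Lipschitz bound for the averaged gradient
  have hlipg : ∀ x y : EuclideanSpace ℝ (Fin d), ‖gradF f x - gradF f y‖ ≤ Kb * ‖x - y‖ := by
    intro x y
    have : gradF f x - gradF f y = c • ∑ i, (gradient (f i) x - gradient (f i) y) := by
      simp only [gradF]
      rw [hgradavg x, hgradavg y]
      simp [Finset.sum_sub_distrib, smul_sub]
    rw [this, norm_smul]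
    calc ‖c‖ * ‖∑ i, (gradient (f i) x - gradient (f i) y)‖
        ≤ c * ∑ i, (K i * ‖x - y‖) := by
          rw [Real.norm_eq_abs, abs_of_nonneg hc0]
          refine mul_le_mul_of_nonneg_left ?_ hc0
          exact (norm_sum_le _ _).trans (Finset.sum_le_sum fun i _ => hgrad i x y)
      _ = Kb * ‖x - y‖ := by rw [hKb, ← Finset.sum_mul]; ring
  -- the Hessian of the average is the average of the Hessians, and the derivative fact
  have hhessAt : ∀ x : EuclideanSpace ℝ (Fin d), HasFDerivAt (gradient (avgFun f)) (c • ∑ i, hessI (f i) x) x := by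
    intro x
    rw [hfun]
    exact (HasFDerivAt.fun_sum fun i _ => (hdgi i x).hasFDerivAt).const_smul c
  have hhessavg : ∀ x : EuclideanSpace ℝ (Fin d), hessF f x = c • ∑ i, hessI (f i) x := by
    intro x
    exact (hhessAt x).fderiv
  have hhessAt' : ∀ x : EuclideanSpace ℝ (Fin d), HasFDerivAt (gradient (avgFun f)) (hessF f x) x := by
    intro x; rw [hhessavg x]; exact hhessAt x
  have hliph : ∀ x y : EuclideanSpace ℝ (Fin d), ‖hessF f x - hessF f y‖ ≤ Lb * ‖x - y‖ := by
    intro x y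
    have : hessF f x - hessF f y = c • ∑ i, (hessI (f i) x - hessI (f i) y) := by
      rw [hhessavg x, hhessavg y]
      simp [Finset.sum_sub_distrib, smul_sub]
    have hns := norm_smul c (∑ i, (hessI (f i) x - hessI (f i) y))
    rw [this, hns]
    calc ‖c‖ * ‖∑ i, (hessI (f i) x - hessI (f i) y)‖
        ≤ c * ∑ i, (L i * ‖x - y‖) := by
          rw [Real.norm_eq_abs, abs_of_nonneg hc0]
          refine mul_le_mul_of_nonneg_left ?_ hc0
          exact (norm_sum_le _ _).trans (Finset.sum_le_sum fun i _ => hhess i x y)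
      _ = Lb * ‖x - y‖ := by rw [hLb, ← Finset.sum_mul]; ring
  -- derivative along the line
  set g : EuclideanSpace ℝ (Fin d) := gradF f w with hg
  have hγ : ∀ t : ℝ, HasDerivAt (fun s : ℝ => w + s • p) p t := by
    intro t
    simpa using ((hasDerivAt_id t).smul_const p).const_add w
  have hu : ∀ t : ℝ, HasDerivAt (fun s : ℝ => gradF f (w + s • p))
      (hessF f (w + t • p) p) t := by
    intro t
    exact (hhessAt' (w + t • p)).comp_hasDerivAt t (hγ t)
  have hψ : ∀ t : ℝ, HasDerivAt (fun s : ℝ => ⟪g, gradF f (w + s • p)⟫)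
      (⟪g, hessF f (w + t • p) p⟫) t := by
    intro t
    have := HasDerivAt.inner ℝ (hasDerivAt_const t g) (hu t)
    simpa using this
  -- continuity of the derivative
  have hcontH : Continuous fun t : ℝ => hessF f (w + t • p) := by
    have hlip : LipschitzWith (Real.toNNReal Lb) (hessF f) := by
      apply LipschitzWith.of_dist_le_mul
      intro x y
      rw [dist_eq_norm, dist_eq_norm]
      calc ‖hessF f x - hessF f y‖ ≤ Lb * ‖x - y‖ := hliph x y
        _ ≤ Real.toNNReal Lb * ‖x - y‖ := by
            gcongr; exact Real.le_coe_toNNReal Lb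
    exact hlip.continuous.comp (continuous_const.add (continuous_id.smul continuous_const))
  have hcont : Continuous fun t : ℝ => ⟪g, hessF f (w + t • p) p⟫ := by
    have h1 : Continuous fun t : ℝ => hessF f (w + t • p) p :=
      (ContinuousLinearMap.apply ℝ (EuclideanSpace ℝ (Fin d)) p).continuous.comp hcontH
    exact continuous_const.inner h1
  -- FTC
  set C : ℝ := Lb * ‖g‖ * ‖p‖ ^ 2 with hC
  have hFTC : ∫ t in (0:ℝ)..α, ⟪g, hessF f (w + t • p) p⟫
      = ⟪g, gradF f (w + α • p)⟫ - ⟪g, gradF f (w + (0:ℝ) • p)⟫ :=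
    intervalIntegral.integral_eq_sub_of_hasDerivAt (fun t _ => hψ t)
      (hcont.intervalIntegrable _ _)
  have hmono : ∫ t in (0:ℝ)..α, ⟪g, hessF f (w + t • p) p⟫
      ≤ ∫ t in (0:ℝ)..α, (⟪g, hessF f w p⟫ + C * t) := by
    apply intervalIntegral.integral_mono_on hα (hcont.intervalIntegrable _ _)
      ((continuous_const.add (continuous_const.mul continuous_id')).intervalIntegrable _ _)
    intro t ht
    have ht0 : 0 ≤ t := ht.1
    have h2 : ⟪g, hessF f (w + t • p) p⟫ - ⟪g, hessF f w p⟫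
        = ⟪g, (hessF f (w + t • p) - hessF f w) p⟫ := by
      rw [ContinuousLinearMap.sub_apply, inner_sub_right]
    have h3 : ⟪g, (hessF f (w + t • p) - hessF f w) p⟫ ≤ C * t := by
      have hcs := real_inner_le_norm g ((hessF f (w + t • p) - hessF f w) p)
      have hop := ContinuousLinearMap.le_opNorm (hessF f (w + t • p) - hessF f w) p
      have hlp : ‖hessF f (w + t • p) - hessF f w‖ ≤ Lb * (t * ‖p‖) := by
        have h := hliph (w + t • p) w
        rw [add_sub_cancel_left, norm_smul, Real.norm_eq_abs, abs_of_nonneg ht0] at h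
        exact h
      calc ⟪g, (hessF f (w + t • p) - hessF f w) p⟫
          ≤ ‖g‖ * ‖(hessF f (w + t • p) - hessF f w) p‖ := hcs
        _ ≤ ‖g‖ * (‖hessF f (w + t • p) - hessF f w‖ * ‖p‖) := by
            gcongr
        _ ≤ ‖g‖ * ((Lb * (t * ‖p‖)) * ‖p‖) := by gcongr
        _ = C * t := by rw [hC]; ring
    show ⟪g, hessF f (w + t • p) p⟫ ≤ ⟪g, hessF f w p⟫ + C * t
    linarith [h2, h3]
  have hIntRHS : ∫ t in (0:ℝ)..α, (⟪g, hessF f w p⟫ + C * t)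
      = α * ⟪g, hessF f w p⟫ + C * (α ^ 2 / 2) := by
    rw [intervalIntegral.integral_add (intervalIntegrable_const)
      ((continuous_mul_left C).intervalIntegrable _ _),
      intervalIntegral.integral_const, intervalIntegral.integral_const_mul, integral_id]
    simp [smul_eq_mul]
  -- symmetry of the Hessian
  have hsymm : ⟪g, hessF f w p⟫ = ⟪p, hessF f w g⟫ := by
    have := inner_fderiv_gradient_symm havg w g p
    simpa [hessF] using this
  -- assemble
  have hstart : ⟪g, gradF f (w + (0:ℝ) • p)⟫ = ‖g‖ ^ 2 := by
    rw [zero_smul, add_zero, ← hg, real_inner_self_eq_norm_sq]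
  have hinner : ⟪g, gradF f (w + α • p)⟫ - ‖g‖ ^ 2
      ≤ α * ⟪p, hessF f w g⟫ + C * (α ^ 2 / 2) := by
    rw [← hstart, ← hFTC, ← hsymm, ← hIntRHS]
    exact hmono
  have hnorm : ‖gradF f (w + α • p) - g‖ ≤ Kb * (α * ‖p‖) := by
    have h := hlipg (w + α • p) w
    rw [add_sub_cancel_left, norm_smul, Real.norm_eq_abs, abs_of_nonneg hα] at h
    exact h
  have hnormsq : ‖gradF f (w + α • p) - g‖ ^ 2 ≤ (Kb * (α * ‖p‖)) ^ 2 :=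
    pow_le_pow_left₀ (norm_nonneg _) hnorm 2
  have hexp : ‖gradF f (w + α • p)‖ ^ 2
      = ‖g‖ ^ 2 + 2 * ⟪g, gradF f (w + α • p) - g⟫ + ‖gradF f (w + α • p) - g‖ ^ 2 := by
    have := norm_add_sq_real g (gradF f (w + α • p) - g)
    rwa [add_sub_cancel] at this
  have hinner2 : ⟪g, gradF f (w + α • p) - g⟫
      = ⟪g, gradF f (w + α • p)⟫ - ‖g‖ ^ 2 := by
    rw [inner_sub_right, real_inner_self_eq_norm_sq]
  have hGL : Lb * ‖g‖ * (‖p‖ ^ 2 * α ^ 2) ≤ Lb * G * (‖p‖ ^ 2 * α ^ 2) := by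
    have h1 : Lb * ‖g‖ ≤ Lb * G := mul_le_mul_of_nonneg_left hG hLb0
    exact mul_le_mul_of_nonneg_right h1 (by positivity)
  have hLc : Lconst K L G = Kb ^ 2 + Lb * G := by simp only [Lconst, hKb, hLb, hc]
  rw [hLc]
  nlinarith [hexp, hinner2, hinner, hnormsq, hGL, sq_nonneg α, sq_nonneg ‖p‖]
end

section
/- Under Assumption 1, fix w ∈ ℝ^d, set g = ∇f(w) and H = ∇²f(w), fix any G ≥ ‖g‖, and set L = ((1/m)∑_{i=1}^m K_i)² + ((1/m)∑_{i=1}^m L_i)·G. Let ρ ∈ (0,1), θ > 0 and c > 0, and suppose p ∈ ℝ^d satisfies ⟨p, Hg⟩ ≤ −θ‖g‖² and ‖p‖ ≤ c‖g‖. Then for every α ∈ (0, 2(1−ρ)θ/(Lc²)]: ‖∇f(w + αp)‖² ≤ ‖g‖² + 2αρ⟨p, Hg⟩ ≤ (1 − 2αρθ)‖g‖². -/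
open scoped RealInnerProductSpace
open InnerProductSpace

/-- Symmetry of the Hessian pairing for a `C²` function. -/
lemma hess_pair_symm {d : ℕ} (F : EuclideanSpace ℝ (Fin d) → ℝ) (hF : ContDiff ℝ 2 F)
    (w u v : EuclideanSpace ℝ (Fin d)) :
    ⟪u, fderiv ℝ (gradient F) w v⟫ = ⟪v, fderiv ℝ (gradient F) w u⟫ := by
  have hfd1 : ContDiff ℝ 1 (fderiv ℝ F) := hF.fderiv_right (by norm_num)
  have hgC1 : ContDiff ℝ 1 (gradient F) :=
    ((toDual ℝ (EuclideanSpace ℝ (Fin d))).symm.contDiff).comp hfd1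
  have hkey : ∀ a b : EuclideanSpace ℝ (Fin d),
      ⟪a, fderiv ℝ (gradient F) w b⟫ = fderiv ℝ (fderiv ℝ F) w b a := by
    intro a b
    have h1 : HasFDerivAt (fun y => ⟪a, gradient F y⟫)
        ((innerSL ℝ a).comp (fderiv ℝ (gradient F) w)) w :=
      (innerSL ℝ a).hasFDerivAt.comp w
        ((hgC1.differentiable one_ne_zero) w).hasFDerivAt
    have h2 : HasFDerivAt (fun y => fderiv ℝ F y a)
        ((ContinuousLinearMap.apply ℝ ℝ a).comp (fderiv ℝ (fderiv ℝ F) w)) w :=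
      (ContinuousLinearMap.apply ℝ ℝ a).hasFDerivAt.comp w
        ((hfd1.differentiable one_ne_zero) w).hasFDerivAt
    have heq : (fun y => ⟪a, gradient F y⟫) = fun y => fderiv ℝ F y a := by
      funext y
      rw [real_inner_comm]
      exact toDual_symm_apply
    rw [heq] at h1
    have h3 := h1.unique h2
    calc ⟪a, fderiv ℝ (gradient F) w b⟫
        = ((innerSL ℝ a).comp (fderiv ℝ (gradient F) w)) b := rfl
      _ = ((ContinuousLinearMap.apply ℝ ℝ a).comp (fderiv ℝ (fderiv ℝ F) w)) b := by rw [h3]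
      _ = fderiv ℝ (fderiv ℝ F) w b a := rfl
  have hsnd : IsSymmSndFDerivAt ℝ F w := hF.contDiffAt.isSymmSndFDerivAt (by norm_num)
  rw [hkey, hkey, hsnd u v]

set_option maxHeartbeats 2000000 in
/-- **Armijo line-search guarantee.** Under Assumption 1, if `p` is a `θ`-descent direction
for the gradient-norm surrogate with `‖p‖ ≤ c‖∇f(w)‖`, then every step-size
`α ∈ (0, 2(1−ρ)θ/(Lc²)]` passes the Armijo-type line search and yields the stated
reduction of the squared gradient norm. -/
theorem stmt_3 {d m : ℕ} (hm : 0 < m)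
    (f : Fin m → EuclideanSpace ℝ (Fin d) → ℝ)
    (hf : ∀ i, ContDiff ℝ 2 (f i))
    (K L : Fin m → ℝ) (hK : ∀ i, 0 < K i) (hL : ∀ i, 0 < L i)
    (hgrad : ∀ i (x y : EuclideanSpace ℝ (Fin d)),
      ‖gradient (f i) x - gradient (f i) y‖ ≤ K i * ‖x - y‖)
    (hhess : ∀ i (x y : EuclideanSpace ℝ (Fin d)),
      ‖hessI (f i) x - hessI (f i) y‖ ≤ L i * ‖x - y‖)
    (w : EuclideanSpace ℝ (Fin d)) (G : ℝ) (hG : ‖gradF f w‖ ≤ G)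
    (ρ θ c : ℝ) (hρ0 : 0 < ρ) (hρ1 : ρ < 1) (hθ : 0 < θ) (hc : 0 < c)
    (p : EuclideanSpace ℝ (Fin d))
    (hdesc : ⟪p, hessF f w (gradF f w)⟫ ≤ -θ * ‖gradF f w‖ ^ 2)
    (hnorm : ‖p‖ ≤ c * ‖gradF f w‖) :
    ∀ α : ℝ, 0 < α → α ≤ 2 * (1 - ρ) * θ / (Lconst K L G * c ^ 2) →
      ‖gradF f (w + α • p)‖ ^ 2
          ≤ ‖gradF f w‖ ^ 2 + 2 * α * ρ * ⟪p, hessF f w (gradF f w)⟫ ∧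
      ‖gradF f w‖ ^ 2 + 2 * α * ρ * ⟪p, hessF f w (gradF f w)⟫
          ≤ (1 - 2 * α * ρ * θ) * ‖gradF f w‖ ^ 2 := by
  intro α hα0 hαle
  have hne : Nonempty (Fin m) := ⟨⟨0, hm⟩⟩
  have hMpos : (0:ℝ) < m := Nat.cast_pos.mpr hm
  set g : EuclideanSpace ℝ (Fin d) → EuclideanSpace ℝ (Fin d) := gradient (avgFun f) with hgdef
  set Kb : ℝ := (1 / (m:ℝ)) * ∑ i, K i with hKbdef
  set Lb : ℝ := (1 / (m:ℝ)) * ∑ i, L i with hLbdef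
  have hKbpos : 0 < Kb :=
    mul_pos (by positivity) (Finset.sum_pos (fun i _ => hK i) Finset.univ_nonempty)
  have hLbpos : 0 < Lb :=
    mul_pos (by positivity) (Finset.sum_pos (fun i _ => hL i) Finset.univ_nonempty)
  -- smoothness
  have hA : ContDiff ℝ 2 (avgFun f) :=
    contDiff_const.mul (ContDiff.sum fun i _ => hf i)
  have hfd : ∀ i, Differentiable ℝ (f i) := fun i => (hf i).differentiable (by norm_num)
  have hgC1 : ContDiff ℝ 1 g :=
    ((toDual ℝ (EuclideanSpace ℝ (Fin d))).symm.contDiff).comp (hA.fderiv_right (by norm_num))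
  have hgD : Differentiable ℝ g := hgC1.differentiable one_ne_zero
  have hgiD : ∀ i, Differentiable ℝ (gradient (f i)) := fun i =>
    (((toDual ℝ (EuclideanSpace ℝ (Fin d))).symm.contDiff).comp
      ((hf i).fderiv_right (by norm_num))).differentiable one_ne_zero
  -- gradient of the average is the average of the gradients
  have hfderivA : ∀ x, HasFDerivAt (avgFun f)
      ((1/(m:ℝ)) • ∑ i, fderiv ℝ (f i) x) x := fun x =>
    (HasFDerivAt.fun_sum (fun i (_ : i ∈ Finset.univ) => (hfd i x).hasFDerivAt)).const_mul _
  have hgsum : ∀ x, g x = (1/(m:ℝ)) • ∑ i, gradient (f i) x := by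
    intro x
    show (toDual ℝ _).symm (fderiv ℝ (avgFun f) x) = _
    rw [(hfderivA x).fderiv, map_smul, map_sum]
    rfl
  -- the gradient is Kb-Lipschitz
  have hglip : ∀ x y, ‖g x - g y‖ ≤ Kb * ‖x - y‖ := by
    intro x y
    rw [hgsum x, hgsum y, ← smul_sub, ← Finset.sum_sub_distrib, norm_smul,
      Real.norm_of_nonneg (by positivity : (0:ℝ) ≤ 1/(m:ℝ))]
    have h1 : ‖∑ i, (gradient (f i) x - gradient (f i) y)‖ ≤ (∑ i, K i) * ‖x - y‖ :=
      calc ‖∑ i, (gradient (f i) x - gradient (f i) y)‖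
          ≤ ∑ i, ‖gradient (f i) x - gradient (f i) y‖ := norm_sum_le _ _
        _ ≤ ∑ i, K i * ‖x - y‖ := Finset.sum_le_sum (fun i _ => hgrad i x y)
        _ = (∑ i, K i) * ‖x - y‖ := by rw [← Finset.sum_mul]
    calc (1/(m:ℝ)) * ‖∑ i, (gradient (f i) x - gradient (f i) y)‖
        ≤ (1/(m:ℝ)) * ((∑ i, K i) * ‖x - y‖) := by
          exact mul_le_mul_of_nonneg_left h1 (by positivity)
      _ = Kb * ‖x - y‖ := by rw [hKbdef]; ring
  -- Hessian is bounded by Kb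
  have hHbd : ∀ x, ‖fderiv ℝ g x‖ ≤ Kb := by
    intro x
    exact HasFDerivAt.le_of_lip' (hgD x).hasFDerivAt hKbpos.le
      (Filter.Eventually.of_forall (fun y => hglip y x))
  -- Hessian is the average of the individual Hessians
  have hHsum : ∀ x, fderiv ℝ g x = (1/(m:ℝ)) • ∑ i, hessI (f i) x := by
    intro x
    have h2 : HasFDerivAt (fun y => (1/(m:ℝ)) • ∑ i, gradient (f i) y)
        ((1/(m:ℝ)) • ∑ i, hessI (f i) x) x :=
      (HasFDerivAt.fun_sum (fun i (_ : i ∈ Finset.univ) => (hgiD i x).hasFDerivAt)).const_smul (1/(m:ℝ))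
    have hg_eq : g = fun y => (1/(m:ℝ)) • ∑ i, gradient (f i) y := funext hgsum
    rw [hg_eq]
    exact h2.fderiv
  -- Hessian is Lb-Lipschitz
  have hHlip : ∀ x y, ‖fderiv ℝ g x - fderiv ℝ g y‖ ≤ Lb * ‖x - y‖ := by
    intro x y
    rw [hHsum x, hHsum y, ← smul_sub (1/(m:ℝ)) (∑ i, hessI (f i) x) (∑ i, hessI (f i) y), ← Finset.sum_sub_distrib, norm_smul,
      Real.norm_of_nonneg (by positivity : (0:ℝ) ≤ 1/(m:ℝ))]
    have h1 : ‖∑ i, (hessI (f i) x - hessI (f i) y)‖ ≤ (∑ i, L i) * ‖x - y‖ :=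
      calc ‖∑ i, (hessI (f i) x - hessI (f i) y)‖
          ≤ ∑ i, ‖hessI (f i) x - hessI (f i) y‖ := norm_sum_le _ _
        _ ≤ ∑ i, L i * ‖x - y‖ := Finset.sum_le_sum (fun i _ => hhess i x y)
        _ = (∑ i, L i) * ‖x - y‖ := by rw [← Finset.sum_mul]
    calc (1/(m:ℝ)) * ‖∑ i, (hessI (f i) x - hessI (f i) y)‖
        ≤ (1/(m:ℝ)) * ((∑ i, L i) * ‖x - y‖) := by
          exact mul_le_mul_of_nonneg_left h1 (by positivity)
      _ = Lb * ‖x - y‖ := by rw [hLbdef]; ring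
  -- notation
  set gn : ℝ := ‖g w‖ with hgn
  have hgnG : gn ≤ G := hG
  have hgn0 : 0 ≤ gn := norm_nonneg _
  have hG0 : 0 ≤ G := le_trans hgn0 hgnG
  set N : ℝ := Lconst K L G with hNdef
  have hNeq : N = Kb^2 + Lb * G := rfl
  have hNpos : 0 < N := by
    rw [hNeq]; positivity
  -- the curve and the derivative of s ↦ ‖∇f(w + s p)‖²
  have hcurve : ∀ s : ℝ, HasDerivAt (fun t : ℝ => w + t • p) p s := by
    intro s
    have h1 : HasDerivAt (fun t : ℝ => t • p) ((1:ℝ) • p) s := (hasDerivAt_id s).smul_const p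
    simpa using h1.const_add w
  have hGd : ∀ s : ℝ, HasDerivAt (fun t => g (w + t • p)) (fderiv ℝ g (w + s • p) p) s :=
    fun s => (hgD _).hasFDerivAt.comp_hasDerivAt s (hcurve s)
  set φ : ℝ → ℝ := fun s => 2 * ⟪g (w + s • p), fderiv ℝ g (w + s • p) p⟫ with hφdef
  have hh' : ∀ s : ℝ, HasDerivAt (fun t => ‖g (w + t • p)‖^2) (φ s) s := by
    intro s
    have h1 := HasDerivAt.inner (𝕜 := ℝ) (hGd s) (hGd s)
    have heq : (fun t : ℝ => ⟪g (w + t • p), g (w + t • p)⟫_ℝ)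
        = fun t : ℝ => ‖g (w + t • p)‖^2 := by
      funext t; rw [real_inner_self_eq_norm_sq]
    rw [heq] at h1
    convert h1 using 1
    · rfl
    · rfl
    simp only [hφdef]
    rw [real_inner_comm (fderiv ℝ g (w + s • p) p) (g (w + s • p))]
    ring
  -- drift bound on φ
  have hdrift : ∀ s : ℝ, 0 ≤ s → φ s - φ 0 ≤ 2 * (N * ‖p‖^2) * s := by
    intro s hs
    have hxw : ‖(w + s • p) - w‖ = s * ‖p‖ := by
      simp [norm_smul, abs_of_nonneg hs]
    have h1 : ‖g (w + s • p) - g w‖ ≤ Kb * (s * ‖p‖) := by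
      have := hglip (w + s • p) w; rwa [hxw] at this
    have h2 : ‖fderiv ℝ g (w + s • p) - fderiv ℝ g w‖ ≤ Lb * (s * ‖p‖) := by
      have := hHlip (w + s • p) w; rwa [hxw] at this
    have hsplit : ⟪g (w + s • p), fderiv ℝ g (w + s • p) p⟫_ℝ
          - ⟪g (w + (0:ℝ) • p), fderiv ℝ g (w + (0:ℝ) • p) p⟫_ℝ
        = ⟪g (w + s • p) - g w, fderiv ℝ g (w + s • p) p⟫_ℝ
          + ⟪g w, fderiv ℝ g (w + s • p) p - fderiv ℝ g w p⟫_ℝ := by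
      simp only [zero_smul, add_zero, inner_sub_left, inner_sub_right]
      ring
    have e1 : ⟪g (w + s • p) - g w, fderiv ℝ g (w + s • p) p⟫_ℝ
        ≤ (Kb * (s * ‖p‖)) * (Kb * ‖p‖) := by
      calc ⟪g (w + s • p) - g w, fderiv ℝ g (w + s • p) p⟫_ℝ
          ≤ ‖g (w + s • p) - g w‖ * ‖fderiv ℝ g (w + s • p) p‖ := real_inner_le_norm _ _
        _ ≤ (Kb * (s * ‖p‖)) * (Kb * ‖p‖) := by
            apply mul_le_mul h1 ?_ (norm_nonneg _) (by positivity)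
            calc ‖fderiv ℝ g (w + s • p) p‖
                ≤ ‖fderiv ℝ g (w + s • p)‖ * ‖p‖ := ContinuousLinearMap.le_opNorm _ _
              _ ≤ Kb * ‖p‖ :=
                  mul_le_mul_of_nonneg_right (hHbd _) (norm_nonneg _)
    have e2 : ⟪g w, fderiv ℝ g (w + s • p) p - fderiv ℝ g w p⟫_ℝ
        ≤ G * (Lb * (s * ‖p‖) * ‖p‖) := by
      calc ⟪g w, fderiv ℝ g (w + s • p) p - fderiv ℝ g w p⟫_ℝ
          ≤ ‖g w‖ * ‖fderiv ℝ g (w + s • p) p - fderiv ℝ g w p‖ := real_inner_le_norm _ _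
        _ ≤ G * (Lb * (s * ‖p‖) * ‖p‖) := by
            apply mul_le_mul hgnG ?_ (norm_nonneg _) hG0
            calc ‖fderiv ℝ g (w + s • p) p - fderiv ℝ g w p‖
                = ‖(fderiv ℝ g (w + s • p) - fderiv ℝ g w) p‖ := by
                  rw [ContinuousLinearMap.sub_apply]
              _ ≤ ‖fderiv ℝ g (w + s • p) - fderiv ℝ g w‖ * ‖p‖ :=
                  ContinuousLinearMap.le_opNorm _ _
              _ ≤ Lb * (s * ‖p‖) * ‖p‖ :=
                  mul_le_mul_of_nonneg_right h2 (norm_nonneg _)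
    have : φ s - φ 0 = 2 * (⟪g (w + s • p), fderiv ℝ g (w + s • p) p⟫_ℝ
        - ⟪g (w + (0:ℝ) • p), fderiv ℝ g (w + (0:ℝ) • p) p⟫_ℝ) := by
      simp only [hφdef]; ring
    rw [this, hsplit, hNeq]
    have hring : (Kb * (s * ‖p‖)) * (Kb * ‖p‖) + G * (Lb * (s * ‖p‖) * ‖p‖)
        = ((Kb^2 + Lb * G) * ‖p‖^2) * s := by ring
    linarith [e1, e2]
  -- descent inequality via monotonicity
  set Nq : ℝ := N * ‖p‖^2 with hNqdef
  set h0 : ℝ := ‖g w‖^2 with hh0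
  set ψ : ℝ → ℝ := fun t => h0 + t * φ 0 + Nq * t^2 - ‖g (w + t • p)‖^2 with hψdef
  have hψ' : ∀ s : ℝ, HasDerivAt ψ (φ 0 + Nq * (2 * s) - φ s) s := by
    intro s
    have h1 : HasDerivAt (fun t : ℝ => h0 + t * φ 0) (φ 0) s := by
      simpa using ((hasDerivAt_id s).mul_const (φ 0)).const_add h0
    have h2 : HasDerivAt (fun t : ℝ => Nq * t^2) (Nq * (2 * s)) s := by
      have := (hasDerivAt_pow 2 s).const_mul Nq
      simpa using this
    exact (h1.add h2).sub (hh' s)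
  have hmono : MonotoneOn ψ (Set.Icc 0 α) := by
    apply monotoneOn_of_deriv_nonneg (convex_Icc 0 α)
    · exact fun s _ => ((hψ' s).differentiableAt).continuousAt.continuousWithinAt
    · intro s _
      exact ((hψ' s).differentiableAt).differentiableWithinAt
    · intro s hs
      rw [interior_Icc] at hs
      rw [(hψ' s).deriv]
      have := hdrift s hs.1.le
      linarith
  have hmkey : ψ 0 ≤ ψ α := hmono (Set.mem_Icc.mpr ⟨le_rfl, hα0.le⟩)
    (Set.mem_Icc.mpr ⟨hα0.le, le_rfl⟩) hα0.le
  have hψ0 : ψ 0 = 0 := by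
    simp only [hψdef, zero_smul, add_zero, zero_mul, mul_zero]
    norm_num
    simp [hh0]
  have hdescent : ‖g (w + α • p)‖^2 ≤ h0 + α * φ 0 + Nq * α^2 := by
    have h5 := hmkey
    rw [hψ0] at h5
    simp only [hψdef] at h5
    linarith
  -- identify φ 0 with the Hessian pairing
  have hφ0 : φ 0 = 2 * ⟪p, fderiv ℝ g w (g w)⟫ := by
    simp only [hφdef, zero_smul, add_zero]
    rw [hgdef, hess_pair_symm (avgFun f) hA w (gradient (avgFun f) w) p]
  -- translate statement notation
  have hgFw : gradF f w = g w := rfl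
  have hgFx : gradF f (w + α • p) = g (w + α • p) := rfl
  have hHw : hessF f w = fderiv ℝ g w := rfl
  rw [hgFw, hHw] at hdesc
  rw [hgFw] at hnorm
  rw [hgFw, hgFx, hHw]
  set I : ℝ := ⟪p, fderiv ℝ g w (g w)⟫ with hIdef
  have hp2 : ‖p‖^2 ≤ c^2 * gn^2 := by
    have h := hnorm
    nlinarith [norm_nonneg p]
  have hαb : α * (N * c^2) ≤ 2 * (1 - ρ) * θ :=
    (le_div_iff₀ (mul_pos hNpos (by positivity))).mp hαle
  constructor
  · -- first inequality
    have key : 2 * α * (1 - ρ) * I + Nq * α^2 ≤ 0 := by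
      have t1 : Nq * α^2 ≤ N * α^2 * (c^2 * gn^2) := by
        rw [hNqdef]
        nlinarith [mul_le_mul_of_nonneg_left hp2 (mul_nonneg hNpos.le (sq_nonneg α))]
      have t2 : 2 * α * (1 - ρ) * I ≤ 2 * α * (1 - ρ) * (-θ * gn^2) := by
        apply mul_le_mul_of_nonneg_left hdesc
        nlinarith
      have t3 : N * α^2 * (c^2 * gn^2) ≤ 2 * (1 - ρ) * θ * (α * gn^2) := by
        nlinarith [mul_le_mul_of_nonneg_right hαb
          (show (0:ℝ) ≤ α * gn^2 by positivity)]
      nlinarith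
    have : h0 + α * φ 0 + Nq * α^2 ≤ gn^2 + 2 * α * ρ * I := by
      rw [hφ0, hh0, hgn]
      nlinarith [key]
    calc ‖g (w + α • p)‖^2 ≤ h0 + α * φ 0 + Nq * α^2 := hdescent
      _ ≤ gn^2 + 2 * α * ρ * I := this
      _ = ‖g w‖^2 + 2 * α * ρ * I := by rw [hgn]
  · -- second inequality
    have h2 : 2 * α * ρ * I ≤ 2 * α * ρ * (-θ * ‖g w‖^2) :=
      mul_le_mul_of_nonneg_left hdesc (by positivity)
    nlinarith [h2]
end

section
/- (Convergence under Case 1.) Suppose Assumptions 1 and 2 hold. Fix w ∈ ℝ^d, set g = ∇f(w), H = ∇²f(w) and H_i = ∇²f_i(w); fix any G ≥ ‖g‖ and set L = ((1/m)∑_{i=1}^m K_i)² + ((1/m)∑_{i=1}^m L_i)·G. For each i let p_i ∈ range(H_i) satisfy H_i²p_i = −H_i g (i.e. p_i = −H_i†g is the minimum-norm least-squares solution), let p = (1/m)∑_{i=1}^m p_i, and suppose the Case 1 condition ⟨p, Hg⟩ ≤ −θ‖g‖² holds for some θ > 0. Let ρ ∈ (0,1), γ = ((1/m)∑_{i=1}^m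 1/γ_i)⁻¹ and τ₁ = 2(1−ρ)γ²θ/L. Then for every α ∈ (0, τ₁]: ‖∇f(w + αp)‖² ≤ ‖g‖² + 2αρ⟨p, Hg⟩ ≤ (1 − 2αρθ)‖g‖²; in particular ‖∇f(w + τ₁p)‖² ≤ (1 − 2τ₁ρθ)‖g‖². Moreover, if g ≠ 0 then necessarily θ ≤ √L/γ, which implies 0 ≤ 1 − 2τ₁ρθ < 1. -/
open scoped RealInnerProductSpace

section Aux

variable {d : ℕ}

local notation "E" => EuclideanSpace ℝ (Fin d)

/-- `toDual.symm` as a genuinely `ℝ`-linear isometry equiv. -/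
noncomputable def eE (d : ℕ) : (StrongDual ℝ (EuclideanSpace ℝ (Fin d))) ≃ₗᵢ[ℝ]
    EuclideanSpace ℝ (Fin d) :=
  (InnerProductSpace.toDual ℝ _).symm

lemma eE_inner (y : StrongDual ℝ E) (x : E) : ⟪eE d y, x⟫ = y x :=
  InnerProductSpace.toDual_symm_apply

lemma gradient_def (g : E → ℝ) (x : E) : gradient g x = eE d (fderiv ℝ g x) := rfl

lemma contDiff_gradient {g : E → ℝ} (hg : ContDiff ℝ 2 g) :
    ContDiff ℝ 1 (gradient g) := by
  have h1 : ContDiff ℝ 1 (fderiv ℝ g) := hg.fderiv_right (by norm_num)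
  exact (eE d).contDiff.comp h1

lemma hasFDerivAt_gradient_s5 {g : E → ℝ} (hg : ContDiff ℝ 2 g) (x : E) :
    HasFDerivAt (gradient g) (hessI g x) x :=
  (((contDiff_gradient hg).differentiable (by norm_num)) x).hasFDerivAt

lemma hessI_eq_comp {g : E → ℝ} (hg : ContDiff ℝ 2 g) (w : E) :
    hessI g w = ((eE d).toContinuousLinearEquiv :
        StrongDual ℝ E →L[ℝ] E).comp (fderiv ℝ (fderiv ℝ g) w) := by
  have h1 : ContDiff ℝ 1 (fderiv ℝ g) := hg.fderiv_right (by norm_num)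
  have h2 : HasFDerivAt (fderiv ℝ g) (fderiv ℝ (fderiv ℝ g) w) w :=
    ((h1.differentiable (by norm_num)) w).hasFDerivAt
  have h3 : HasFDerivAt (gradient g)
      (((eE d).toContinuousLinearEquiv :
        StrongDual ℝ E →L[ℝ] E).comp (fderiv ℝ (fderiv ℝ g) w)) w :=
    (((eE d).toContinuousLinearEquiv :
        StrongDual ℝ E →L[ℝ] E).hasFDerivAt).comp w h2
  exact h3.fderiv

lemma hessI_apply_eq {g : E → ℝ} (hg : ContDiff ℝ 2 g) (w u : E) :
    hessI g w u = eE d (fderiv ℝ (fderiv ℝ g) w u) := by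
  rw [hessI_eq_comp hg]; rfl

lemma hessI_symm {g : E → ℝ} (hg : ContDiff ℝ 2 g) (w u v : E) :
    ⟪hessI g w u, v⟫ = ⟪u, hessI g w v⟫ := by
  have hdiff : ∀ y : E, HasFDerivAt g (fderiv ℝ g y) y := fun y =>
    ((hg.differentiable (by norm_num)) y).hasFDerivAt
  have h2 : HasFDerivAt (fderiv ℝ g) (fderiv ℝ (fderiv ℝ g) w) w :=
    (((show ContDiff ℝ 1 (fderiv ℝ g) from hg.fderiv_right (by norm_num)).differentiable (by norm_num)) w).hasFDerivAt
  have hsymm := second_derivative_symmetric hdiff h2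
  rw [hessI_apply_eq hg, hessI_apply_eq hg, eE_inner, real_inner_comm, eE_inner]
  exact hsymm u v

lemma hessI_opnorm {g : E → ℝ} {K : ℝ} (hK : 0 ≤ K)
    (hg : ∀ x y : E, ‖gradient g x - gradient g y‖ ≤ K * ‖x - y‖) (w u : E) :
    ‖hessI g w u‖ ≤ K * ‖u‖ := by
  have hlip : LipschitzWith (Real.toNNReal K) (gradient g) := by
    apply LipschitzWith.of_dist_le_mul
    intro x y
    rw [dist_eq_norm, dist_eq_norm]
    simpa [Real.coe_toNNReal K hK] using hg x y
  have h1 : ‖hessI g w‖ ≤ K := by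
    have h2 := norm_fderiv_le_of_lipschitz ℝ (f := gradient g) (x₀ := w) hlip
    rw [Real.coe_toNNReal K hK] at h2
    exact h2
  calc ‖hessI g w u‖ ≤ ‖hessI g w‖ * ‖u‖ := (hessI g w).le_opNorm u
    _ ≤ K * ‖u‖ := mul_le_mul_of_nonneg_right h1 (norm_nonneg u)

end Aux

section Avg

variable {d m : ℕ}

local notation "E" => EuclideanSpace ℝ (Fin d)

variable (f : Fin m → EuclideanSpace ℝ (Fin d) → ℝ)

lemma avg_contDiff (hf : ∀ i, ContDiff ℝ 2 (f i)) : ContDiff ℝ 2 (avgFun f) :=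
  contDiff_const.mul (ContDiff.sum fun i _ => hf i)

lemma gradF_eq (hf : ∀ i, ContDiff ℝ 2 (f i)) (x : E) :
    gradF f x = (1 / (m : ℝ)) • ∑ i, gradient (f i) x := by
  have hdiff : ∀ i : Fin m, DifferentiableAt ℝ (f i) x := fun i =>
    ((hf i).differentiable (by norm_num)) x
  have hsum : DifferentiableAt ℝ (fun w : E => ∑ i, f i w) x :=
    DifferentiableAt.fun_sum fun i _ => hdiff i
  have h1 : fderiv ℝ (avgFun f) x = (1 / (m : ℝ)) • ∑ i, fderiv ℝ (f i) x := by
    unfold avgFun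
    rw [fderiv_const_mul hsum, fderiv_fun_sum fun i _ => hdiff i]
  show eE d (fderiv ℝ (avgFun f) x) = _
  rw [h1, map_smul, map_sum]
  rfl

lemma gradF_lip (hf : ∀ i, ContDiff ℝ 2 (f i)) (K : Fin m → ℝ)
    (hgrad : ∀ i (x y : E), ‖gradient (f i) x - gradient (f i) y‖ ≤ K i * ‖x - y‖)
    (x y : E) :
    ‖gradF f x - gradF f y‖ ≤ ((1 / (m : ℝ)) * ∑ i, K i) * ‖x - y‖ := by
  rw [gradF_eq f hf, gradF_eq f hf, ← smul_sub, ← Finset.sum_sub_distrib]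
  rw [norm_smul]
  have h1 : ‖∑ i, (gradient (f i) x - gradient (f i) y)‖ ≤ (∑ i, K i) * ‖x - y‖ := by
    calc ‖∑ i, (gradient (f i) x - gradient (f i) y)‖
        ≤ ∑ i, ‖gradient (f i) x - gradient (f i) y‖ := norm_sum_le _ _
      _ ≤ ∑ i, K i * ‖x - y‖ := Finset.sum_le_sum fun i _ => hgrad i x y
      _ = (∑ i, K i) * ‖x - y‖ := by rw [Finset.sum_mul]
  have h2 : ‖(1 / (m : ℝ))‖ = 1 / (m : ℝ) := by
    rw [Real.norm_eq_abs, abs_of_nonneg]; positivity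
  rw [h2, mul_assoc]
  exact mul_le_mul_of_nonneg_left h1 (by positivity)

lemma hessF_eq (hf : ∀ i, ContDiff ℝ 2 (f i)) (x : E) :
    hessF f x = (1 / (m : ℝ)) • ∑ i, hessI (f i) x := by
  have hfun : gradient (avgFun f) = fun x : E => (1 / (m : ℝ)) • ∑ i, gradient (f i) x :=
    funext (gradF_eq f hf)
  have h1 : HasFDerivAt (fun x : E => (1 / (m : ℝ)) • ∑ i, gradient (f i) x)
      ((1 / (m : ℝ)) • ∑ i, hessI (f i) x) x :=
    (HasFDerivAt.fun_sum fun i _ => hasFDerivAt_gradient_s5 (hf i) x).fun_const_smul _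
  show fderiv ℝ (gradient (avgFun f)) x = _
  rw [hfun]
  exact h1.fderiv

lemma hessF_lip (hf : ∀ i, ContDiff ℝ 2 (f i)) (L : Fin m → ℝ)
    (hhess : ∀ i (x y : E), ‖hessI (f i) x - hessI (f i) y‖ ≤ L i * ‖x - y‖)
    (x y v : E) :
    ‖hessF f x v - hessF f y v‖ ≤ ((1 / (m : ℝ)) * ∑ i, L i) * ‖x - y‖ * ‖v‖ := by
  rw [hessF_eq f hf, hessF_eq f hf]
  have heval : ((1 / (m : ℝ)) • ∑ i, hessI (f i) x) v - ((1 / (m : ℝ)) • ∑ i, hessI (f i) y) v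
      = (1 / (m : ℝ)) • ∑ i, ((hessI (f i) x - hessI (f i) y) v) := by
    simp [Finset.smul_sum, ContinuousLinearMap.sum_apply, smul_sub, ← Finset.sum_sub_distrib,
      ContinuousLinearMap.sub_apply]
  rw [heval, norm_smul]
  have h2 : ‖(1 / (m : ℝ))‖ = 1 / (m : ℝ) := by
    rw [Real.norm_eq_abs, abs_of_nonneg]; positivity
  have h1 : ‖∑ i, ((hessI (f i) x - hessI (f i) y) v)‖ ≤ (∑ i, L i) * ‖x - y‖ * ‖v‖ := by
    calc ‖∑ i, ((hessI (f i) x - hessI (f i) y) v)‖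
        ≤ ∑ i, ‖(hessI (f i) x - hessI (f i) y) v‖ := norm_sum_le _ _
      _ ≤ ∑ i, L i * ‖x - y‖ * ‖v‖ := by
          refine Finset.sum_le_sum fun i _ => ?_
          calc ‖(hessI (f i) x - hessI (f i) y) v‖
              ≤ ‖hessI (f i) x - hessI (f i) y‖ * ‖v‖ :=
                (hessI (f i) x - hessI (f i) y).le_opNorm v
            _ ≤ L i * ‖x - y‖ * ‖v‖ :=
                mul_le_mul_of_nonneg_right (hhess i x y) (norm_nonneg v)
      _ = (∑ i, L i) * ‖x - y‖ * ‖v‖ := by rw [Finset.sum_mul, Finset.sum_mul]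
  rw [h2]
  calc (1 / (m : ℝ)) * ‖∑ i, ((hessI (f i) x - hessI (f i) y) v)‖
      ≤ (1 / (m : ℝ)) * ((∑ i, L i) * ‖x - y‖ * ‖v‖) :=
        mul_le_mul_of_nonneg_left h1 (by positivity)
    _ = ((1 / (m : ℝ)) * ∑ i, L i) * ‖x - y‖ * ‖v‖ := by ring

end Avg

section Taylor

variable {d m : ℕ}

local notation "E" => EuclideanSpace ℝ (Fin d)

lemma taylor_bound (f : Fin m → EuclideanSpace ℝ (Fin d) → ℝ)
    (hf : ∀ i, ContDiff ℝ 2 (f i)) (Lb : ℝ) (hLb : 0 ≤ Lb)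
    (hlip : ∀ x y v : E, ‖hessF f x v - hessF f y v‖ ≤ Lb * ‖x - y‖ * ‖v‖)
    (w p : E) (α : ℝ) (hα : 0 ≤ α) :
    ‖gradF f (w + α • p) - gradF f w - α • (hessF f w p)‖ ≤ Lb * ‖p‖ ^ 2 * α ^ 2 / 2 := by
  have hAvg : ContDiff ℝ 2 (avgFun f) := avg_contDiff f hf
  set c : ℝ := Lb * ‖p‖ ^ 2 with hc
  have hc0 : 0 ≤ c := by positivity
  set ψ : ℝ → E := fun t => gradF f (w + t • p) - gradF f w - t • (hessF f w p) with hψ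
  set ψ' : ℝ → E := fun t => hessF f (w + t • p) p - hessF f w p with hψ'
  have hderiv : ∀ t : ℝ, HasDerivAt ψ (ψ' t) t := by
    intro t
    have h1 : HasDerivAt (fun t : ℝ => w + t • p) p t := by
      simpa using ((hasDerivAt_id t).smul_const p).const_add w
    have h2 : HasDerivAt (fun t : ℝ => gradF f (w + t • p)) (hessF f (w + t • p) p) t :=
      (hasFDerivAt_gradient_s5 hAvg (w + t • p)).comp_hasDerivAt t h1
    have h3 : HasDerivAt (fun t : ℝ => t • (hessF f w p)) (hessF f w p) t := by
      simpa using (hasDerivAt_id t).smul_const (hessF f w p)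
    simpa [hψ, hψ'] using (h2.sub_const (gradF f w)).fun_sub h3
  have hB : ∀ t : ℝ, HasDerivAt (fun s : ℝ => c * s ^ 2 / 2) (c * t) t := by
    intro t
    have h := ((hasDerivAt_pow 2 t).const_mul c).div_const 2
    refine h.congr_deriv ?_
    ring
  have key := image_norm_le_of_norm_deriv_right_le_deriv_boundary
    (f := ψ) (f' := ψ') (a := 0) (b := α)
    (fun t _ => (hderiv t).continuousAt.continuousWithinAt)
    (fun t _ => (hderiv t).hasDerivWithinAt)
    (B := fun t => c * t ^ 2 / 2) (B' := fun t => c * t)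
    (by simp [hψ]) hB
    (fun t ht => by
      have h4 : ‖hessF f (w + t • p) p - hessF f w p‖ ≤ Lb * ‖t • p‖ * ‖p‖ := by
        simpa using hlip (w + t • p) w p
      have h5 : ‖t • p‖ = t * ‖p‖ := by
        rw [norm_smul, Real.norm_eq_abs, abs_of_nonneg ht.1]
      calc ‖ψ' t‖ ≤ Lb * ‖t • p‖ * ‖p‖ := h4
        _ = c * t := by rw [h5, hc]; ring)
  exact key (Set.right_mem_Icc.mpr hα)

end Taylor
set_option maxHeartbeats 1000000 in
/-- **Theorem 1 (Convergence under Case 1).** Under Assumptions 1 and 2, with exact local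
updates `pᵢ = −Hᵢ†g` (characterized by `pᵢ ∈ range Hᵢ` and `Hᵢ²pᵢ = −Hᵢg`), if the Case 1
descent condition holds, then every step-size in `(0, τ₁]` with `τ₁ = 2(1−ρ)γ²θ/L` passes
the line search and reduces the squared gradient norm by the factor `(1 − 2αρθ)`; moreover
if `g ≠ 0` then necessarily `θ ≤ √L/γ`, whence `0 ≤ 1 − 2τ₁ρθ < 1`. -/
theorem stmt_5 {d m : ℕ} (hm : 0 < m)
    (f : Fin m → EuclideanSpace ℝ (Fin d) → ℝ)
    (hf : ∀ i, ContDiff ℝ 2 (f i))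
    (K L : Fin m → ℝ) (hK : ∀ i, 0 < K i) (hL : ∀ i, 0 < L i)
    (hgrad : ∀ i (x y : EuclideanSpace ℝ (Fin d)),
      ‖gradient (f i) x - gradient (f i) y‖ ≤ K i * ‖x - y‖)
    (hhess : ∀ i (x y : EuclideanSpace ℝ (Fin d)),
      ‖hessI (f i) x - hessI (f i) y‖ ≤ L i * ‖x - y‖)
    -- Assumption 2: local pseudo-inverse regularity
    (γ : Fin m → ℝ) (hγ : ∀ i, 0 < γ i)
    (hreg : ∀ i (w : EuclideanSpace ℝ (Fin d)),
      ∀ q ∈ LinearMap.range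
        (hessI (f i) w : EuclideanSpace ℝ (Fin d) →ₗ[ℝ] EuclideanSpace ℝ (Fin d)), γ i * ‖q‖ ≤ ‖hessI (f i) w q‖)
    (w : EuclideanSpace ℝ (Fin d)) (G : ℝ) (hG : ‖gradF f w‖ ≤ G)
    (ρ θ : ℝ) (hρ0 : 0 < ρ) (hρ1 : ρ < 1) (hθ : 0 < θ)
    -- the exact Case 1 local directions pᵢ = −Hᵢ†g
    (p : Fin m → EuclideanSpace ℝ (Fin d))
    (hpmem : ∀ i, p i ∈ LinearMap.range
      (hessI (f i) w : EuclideanSpace ℝ (Fin d) →ₗ[ℝ] EuclideanSpace ℝ (Fin d)))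
    (hpeq : ∀ i, hessI (f i) w (hessI (f i) w (p i)) = -(hessI (f i) w (gradF f w)))
    (pbar : EuclideanSpace ℝ (Fin d)) (hpbar : pbar = (1 / (m : ℝ)) • ∑ i, p i)
    -- the Case 1 condition ⟨p, Hg⟩ ≤ −θ‖g‖²
    (hcase : ⟪pbar, hessF f w (gradF f w)⟫ ≤ -θ * ‖gradF f w‖ ^ 2)
    (γbar τ : ℝ) (hγbar : γbar = ((1 / (m : ℝ)) * ∑ i, (γ i)⁻¹)⁻¹)
    (hτ : τ = 2 * (1 - ρ) * γbar ^ 2 * θ / Lconst K L G) :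
    (∀ α : ℝ, 0 < α → α ≤ τ →
      ‖gradF f (w + α • pbar)‖ ^ 2
          ≤ ‖gradF f w‖ ^ 2 + 2 * α * ρ * ⟪pbar, hessF f w (gradF f w)⟫ ∧
      ‖gradF f w‖ ^ 2 + 2 * α * ρ * ⟪pbar, hessF f w (gradF f w)⟫
          ≤ (1 - 2 * α * ρ * θ) * ‖gradF f w‖ ^ 2) ∧
    ‖gradF f (w + τ • pbar)‖ ^ 2 ≤ (1 - 2 * τ * ρ * θ) * ‖gradF f w‖ ^ 2 ∧
    (gradF f w ≠ 0 →
      θ ≤ Real.sqrt (Lconst K L G) / γbar ∧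
      0 ≤ 1 - 2 * τ * ρ * θ ∧ 1 - 2 * τ * ρ * θ < 1) := by
  have hne : Nonempty (Fin m) := Fin.pos_iff_nonempty.mp hm
  have hm0 : (0:ℝ) < (m:ℝ) := Nat.cast_pos.mpr hm
  set g : EuclideanSpace ℝ (Fin d) := gradF f w with hg
  set H := hessF f w with hH
  set Kb : ℝ := (1 / (m:ℝ)) * ∑ i, K i with hKb
  set Lb : ℝ := (1 / (m:ℝ)) * ∑ i, L i with hLb
  have hKb0 : 0 < Kb :=
    mul_pos (by positivity) (Finset.sum_pos (fun i _ => hK i) Finset.univ_nonempty)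
  have hLb0 : 0 < Lb :=
    mul_pos (by positivity) (Finset.sum_pos (fun i _ => hL i) Finset.univ_nonempty)
  have hG0 : 0 ≤ G := le_trans (norm_nonneg _) hG
  have hLc : Lconst K L G = Kb ^ 2 + Lb * G := rfl
  have hLc0 : 0 < Lconst K L G := by
    rw [hLc]
    exact add_pos_of_pos_of_nonneg (pow_pos hKb0 2) (mul_nonneg hLb0.le hG0)
  set s : ℝ := (1 / (m:ℝ)) * ∑ i, (γ i)⁻¹ with hs
  have hs0 : 0 < s :=
    mul_pos (by positivity) (Finset.sum_pos (fun i _ => inv_pos.mpr (hγ i)) Finset.univ_nonempty)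
  have hγbar0 : 0 < γbar := by rw [hγbar]; exact inv_pos.mpr hs0
  have hτ0 : 0 < τ := by
    rw [hτ]
    apply div_pos _ hLc0
    have h1 : 0 < 2 * (1 - ρ) := by linarith
    have h2 := pow_pos hγbar0 2
    exact mul_pos (mul_pos h1 h2) hθ
  clear_value g H Kb Lb s
  have hAvg : ContDiff ℝ 2 (avgFun f) := avg_contDiff f hf
  have hHsymm : ∀ u v : EuclideanSpace ℝ (Fin d), ⟪H u, v⟫ = ⟪u, H v⟫ := by
    rw [hH]
    exact fun u v => hessI_symm hAvg w u v
  have hHnorm : ∀ v : EuclideanSpace ℝ (Fin d), ‖H v‖ ≤ Kb * ‖v‖ := by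
    intro v
    rw [hH, hKb]
    exact hessI_opnorm (K := (1/(m:ℝ)) * ∑ i, K i) (by rw [← hKb]; exact hKb0.le)
      (fun x y => gradF_lip f hf K hgrad x y) w v
  -- per-i bounds
  have hpI : ∀ i, γ i * ‖p i‖ ≤ ‖g‖ := by
    intro i
    have hpe := hpeq i
    set q := hessI (f i) w (p i) with hq
    have hzero : hessI (f i) w (q + g) = 0 := by
      rw [map_add, hpe, neg_add_cancel]
    have horth : ⟪q + g, q⟫ = 0 := by
      have h1 : ⟪hessI (f i) w (p i), q + g⟫ = ⟪p i, hessI (f i) w (q + g)⟫ :=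
        hessI_symm (hf i) w (p i) (q + g)
      rw [hzero, inner_zero_right] at h1
      rw [real_inner_comm]
      exact h1
    have hnorm : ‖q‖ ≤ ‖g‖ := by
      have hexp := norm_sub_sq_real (q + g) q
      rw [add_sub_cancel_left] at hexp
      nlinarith [norm_nonneg (q + g), norm_nonneg q, norm_nonneg g]
    exact le_trans (hreg i w (p i) (hpmem i)) hnorm
  have hpbar_le : ‖pbar‖ ≤ s * ‖g‖ := by
    rw [hpbar, norm_smul]
    have h2 : ‖(1/(m:ℝ))‖ = 1/(m:ℝ) := by rw [Real.norm_eq_abs, abs_of_nonneg]; positivity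
    rw [h2]
    have h3 : ‖∑ i, p i‖ ≤ ∑ i, (γ i)⁻¹ * ‖g‖ := by
      refine le_trans (norm_sum_le _ _) (Finset.sum_le_sum fun i _ => ?_)
      rw [inv_mul_eq_div, le_div_iff₀ (hγ i)]
      calc ‖p i‖ * γ i = γ i * ‖p i‖ := by ring
        _ ≤ ‖g‖ := hpI i
    calc (1/(m:ℝ)) * ‖∑ i, p i‖ ≤ (1/(m:ℝ)) * ∑ i, (γ i)⁻¹ * ‖g‖ :=
          mul_le_mul_of_nonneg_left h3 (by positivity)
      _ = s * ‖g‖ := by rw [hs, ← Finset.sum_mul]; ring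
  have hγp : γbar * ‖pbar‖ ≤ ‖g‖ := by
    rw [hγbar]
    calc s⁻¹ * ‖pbar‖ ≤ s⁻¹ * (s * ‖g‖) :=
          mul_le_mul_of_nonneg_left hpbar_le (inv_nonneg.mpr hs0.le)
      _ = ‖g‖ := by field_simp
  -- main per-α bound
  have main : ∀ α : ℝ, 0 < α → α ≤ τ →
      ‖gradF f (w + α • pbar)‖ ^ 2 ≤ ‖g‖ ^ 2 + 2 * α * ρ * ⟪pbar, H g⟫ := by
    intro α hα0 hατ
    set v : EuclideanSpace ℝ (Fin d) := gradF f (w + α • pbar) with hv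
    set r : EuclideanSpace ℝ (Fin d) := v - g - α • (H pbar) with hr
    clear_value v r
    have hrn : ‖r‖ ≤ Lb * ‖pbar‖ ^ 2 * α ^ 2 / 2 := by
      rw [hr, hv, hg, hH, hLb]
      exact taylor_bound f hf _ (by rw [← hLb]; exact hLb0.le)
        (hessF_lip f hf L hhess) w pbar α hα0.le
    have hvg : ‖v - g‖ ≤ Kb * (α * ‖pbar‖) := by
      rw [hv, hg, hKb]
      have h1 := gradF_lip f hf K hgrad (w + α • pbar) w
      have h2 : ‖w + α • pbar - w‖ = α * ‖pbar‖ := by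
        rw [add_sub_cancel_left, norm_smul, Real.norm_eq_abs, abs_of_nonneg hα0.le]
      rw [h2] at h1
      exact h1
    have hexp : ‖v‖ ^ 2 = ‖g‖ ^ 2 + 2 * ⟪g, v - g⟫ + ‖v - g‖ ^ 2 := by
      have h1 := norm_add_sq_real g (v - g)
      rw [add_sub_cancel] at h1
      exact h1
    have hvgr : v - g = α • (H pbar) + r := by rw [hr]; abel
    have hsplit : ⟪g, v - g⟫ = α * ⟪pbar, H g⟫ + ⟪g, r⟫ := by
      rw [hvgr, inner_add_right, real_inner_smul_right]
      have h1 : ⟪g, H pbar⟫ = ⟪pbar, H g⟫ := by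
        rw [real_inner_comm, hHsymm pbar g]
      rw [h1]
    have hgr : ⟪g, r⟫ ≤ G * (Lb * ‖pbar‖ ^ 2 * α ^ 2 / 2) :=
      le_trans (real_inner_le_norm g r)
        (mul_le_mul hG hrn (norm_nonneg r) hG0)
    have hvg2 : ‖v - g‖ ^ 2 ≤ Kb ^ 2 * α ^ 2 * ‖pbar‖ ^ 2 := by
      have h := pow_le_pow_left₀ (norm_nonneg (v - g)) hvg 2
      calc ‖v - g‖ ^ 2 ≤ (Kb * (α * ‖pbar‖)) ^ 2 := h
        _ = Kb ^ 2 * α ^ 2 * ‖pbar‖ ^ 2 := by ring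
    have step1 : ‖v‖ ^ 2 ≤ ‖g‖ ^ 2 + 2 * α * ⟪pbar, H g⟫ + α ^ 2 * ‖pbar‖ ^ 2 * Lconst K L G := by
      rw [hexp, hsplit, hLc]
      linarith [hgr, hvg2]
    have hLcmul : α * Lconst K L G ≤ 2 * (1 - ρ) * γbar ^ 2 * θ := by
      rw [hτ] at hατ
      calc α * Lconst K L G ≤ (2 * (1 - ρ) * γbar ^ 2 * θ / Lconst K L G) * Lconst K L G :=
            mul_le_mul_of_nonneg_right hατ hLc0.le
        _ = 2 * (1 - ρ) * γbar ^ 2 * θ := by field_simp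
    have hkey : α * Lconst K L G * ‖pbar‖ ^ 2 ≤ 2 * (1 - ρ) * (-(⟪pbar, H g⟫)) := by
      have h1 : γbar ^ 2 * ‖pbar‖ ^ 2 ≤ ‖g‖ ^ 2 := by
        have h := pow_le_pow_left₀ (mul_nonneg hγbar0.le (norm_nonneg pbar)) hγp 2
        calc γbar ^ 2 * ‖pbar‖ ^ 2 = (γbar * ‖pbar‖) ^ 2 := by ring
          _ ≤ ‖g‖ ^ 2 := h
      have h2 : θ * ‖g‖ ^ 2 ≤ -(⟪pbar, H g⟫) := by linarith [hcase]
      have h3 : α * Lconst K L G * ‖pbar‖ ^ 2 ≤ (2 * (1 - ρ) * γbar ^ 2 * θ) * ‖pbar‖ ^ 2 :=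
        mul_le_mul_of_nonneg_right hLcmul (sq_nonneg _)
      have h4 : (2 * (1 - ρ)) * θ * (γbar ^ 2 * ‖pbar‖ ^ 2) ≤ (2 * (1 - ρ)) * θ * ‖g‖ ^ 2 := by
        apply mul_le_mul_of_nonneg_left h1
        exact mul_nonneg (by linarith) hθ.le
      have h5 : (2 * (1 - ρ)) * (θ * ‖g‖ ^ 2) ≤ (2 * (1 - ρ)) * (-(⟪pbar, H g⟫)) := by
        apply mul_le_mul_of_nonneg_left h2
        linarith
      linarith [h3, h4, h5]
    linarith [step1, mul_le_mul_of_nonneg_left hkey hα0.le]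
  -- second chain
  have second : ∀ α : ℝ, 0 < α →
      ‖g‖ ^ 2 + 2 * α * ρ * ⟪pbar, H g⟫ ≤ (1 - 2 * α * ρ * θ) * ‖g‖ ^ 2 := by
    intro α hα0
    have h1 : 0 ≤ 2 * α * ρ := by positivity
    have h2 := mul_le_mul_of_nonneg_left hcase h1
    linarith [h2]
  refine ⟨fun α hα0 hατ => ⟨main α hα0 hατ, second α hα0⟩, ?_, ?_⟩
  · exact le_trans (main τ hτ0 le_rfl) (second τ hτ0)
  · intro hgne
    have hgn : 0 < ‖g‖ := norm_pos_iff.mpr hgne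
    have hIb : θ * ‖g‖ ^ 2 ≤ ‖pbar‖ * ‖H g‖ := by
      have h1 : -(⟪pbar, H g⟫) ≤ ‖pbar‖ * ‖H g‖ :=
        le_trans (neg_le_abs _) (abs_real_inner_le_norm pbar (H g))
      linarith [hcase]
    have hθK : θ ≤ s * Kb := by
      have h1 : ‖pbar‖ * ‖H g‖ ≤ (s * ‖g‖) * (Kb * ‖g‖) :=
        mul_le_mul hpbar_le (hHnorm g) (norm_nonneg _) (by positivity)
      nlinarith [hIb, mul_pos hgn hgn]
    have hKsqrt : Kb ≤ Real.sqrt (Lconst K L G) := by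
      have h1 : Kb ^ 2 ≤ Lconst K L G := by rw [hLc]; nlinarith [mul_nonneg hLb0.le hG0]
      calc Kb = Real.sqrt (Kb ^ 2) := (Real.sqrt_sq hKb0.le).symm
        _ ≤ Real.sqrt (Lconst K L G) := Real.sqrt_le_sqrt h1
    have hθs : θ ≤ s * Real.sqrt (Lconst K L G) := by
      calc θ ≤ s * Kb := hθK
        _ ≤ s * Real.sqrt (Lconst K L G) := mul_le_mul_of_nonneg_left hKsqrt hs0.le
    have hθsqrt : θ ≤ Real.sqrt (Lconst K L G) / γbar := by
      rw [hγbar, div_eq_mul_inv, inv_inv]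
      calc θ ≤ s * Real.sqrt (Lconst K L G) := hθs
        _ = Real.sqrt (Lconst K L G) * s := by ring
    refine ⟨hθsqrt, ?_, ?_⟩
    · -- 0 ≤ 1 - 2τρθ
      have hθγ : θ * γbar ≤ Real.sqrt (Lconst K L G) := by
        rw [hγbar]
        calc θ * s⁻¹ ≤ (s * Real.sqrt (Lconst K L G)) * s⁻¹ :=
              mul_le_mul_of_nonneg_right hθs (inv_nonneg.mpr hs0.le)
          _ = Real.sqrt (Lconst K L G) := by field_simp
      have hsq : (θ * γbar) ^ 2 ≤ Lconst K L G := by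
        have h := pow_le_pow_left₀ (mul_nonneg hθ.le hγbar0.le) hθγ 2
        rwa [Real.sq_sqrt hLc0.le] at h
      have hprod : 2 * τ * ρ * θ * Lconst K L G = 4 * ρ * (1 - ρ) * (θ * γbar) ^ 2 := by
        rw [hτ]; field_simp; ring
      have h4ρ : 4 * ρ * (1 - ρ) ≤ 1 := by nlinarith [sq_nonneg (2 * ρ - 1)]
      have h4ρ0 : 0 ≤ 4 * ρ * (1 - ρ) := by nlinarith
      have : 2 * τ * ρ * θ * Lconst K L G ≤ Lconst K L G := by
        rw [hprod]
        calc 4 * ρ * (1 - ρ) * (θ * γbar) ^ 2 ≤ 4 * ρ * (1 - ρ) * Lconst K L G :=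
              mul_le_mul_of_nonneg_left hsq h4ρ0
          _ ≤ 1 * Lconst K L G := mul_le_mul_of_nonneg_right h4ρ hLc0.le
          _ = Lconst K L G := one_mul _
      nlinarith [hLc0]
    · -- < 1
      have : 0 < 2 * τ * ρ * θ := by positivity
      linarith
end

section
/- Suppose each f_i is twice differentiable. Fix w ∈ ℝ^d, set g = ∇f(w), H = ∇²f(w) and H_i = ∇²f_i(w), and suppose for each i = 1,…,m: H_i is invertible, ‖H_i⁻¹‖ ≤ 1/γ_i for some γ_i > 0, and ‖H_i − H‖ ≤ ε_i (operator norm) for some ε_i ≥ 0. If θ > 0 satisfies (1/m)∑_{i=1}^m (1 − ε_i/γ_i) ≥ θ, then ⟨(1/m)∑_{i=1}^m H_i⁻¹g, Hg⟩ ≥ θ‖g‖²; that is, the Case 1 condition of DINGO holds at w. -/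
open scoped RealInnerProductSpace

lemma hess_symm_aux {d : ℕ} (φ : EuclideanSpace ℝ (Fin d) → ℝ)
    (hφ : ContDiff ℝ 2 φ) (w u v : EuclideanSpace ℝ (Fin d)) :
    ⟪(fderiv ℝ (gradient φ) w) u, v⟫ = ⟪(fderiv ℝ (gradient φ) w) v, u⟫ := by
  have hdiff : DifferentiableAt ℝ (fderiv ℝ φ) w :=
    ((hφ.fderiv_right (m := 1) (by norm_num)).differentiable one_ne_zero) w
  set L : (EuclideanSpace ℝ (Fin d) →L[ℝ] ℝ) →L[ℝ] EuclideanSpace ℝ (Fin d) :=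
    (InnerProductSpace.toDual ℝ (EuclideanSpace ℝ (Fin d))).symm.toContinuousLinearEquiv.toContinuousLinearMap with hL
  have hgrad : gradient φ = fun x => L (fderiv ℝ φ x) := by
    funext x; rfl
  have hfd : fderiv ℝ (gradient φ) w = L.comp (fderiv ℝ (fderiv ℝ φ) w) := by
    rw [hgrad]
    exact (L.hasFDerivAt.comp w hdiff.hasFDerivAt).fderiv
  have key : ∀ a b : EuclideanSpace ℝ (Fin d),
      ⟪(fderiv ℝ (gradient φ) w) a, b⟫ = fderiv ℝ (fderiv ℝ φ) w a b := by
    intro a b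
    rw [hfd]
    show ⟪(InnerProductSpace.toDual ℝ (EuclideanSpace ℝ (Fin d))).symm
        (fderiv ℝ (fderiv ℝ φ) w a), b⟫ = _
    rw [← InnerProductSpace.toDual_apply_apply,
      (InnerProductSpace.toDual ℝ (EuclideanSpace ℝ (Fin d))).apply_symm_apply]
  rw [key, key]
  exact (hφ.contDiffAt.isSymmSndFDerivAt (by simp [minSmoothness_of_isRCLikeNormedField])) u v

/-- **Lemma 1 of the paper.** If each local Hessian `Hᵢ = ∇²fᵢ(w)` is invertible with
`‖Hᵢ⁻¹‖ ≤ 1/γᵢ` and `‖Hᵢ − H‖ ≤ εᵢ`, and `(1/m)∑ᵢ(1 − εᵢ/γᵢ) ≥ θ`, then the Case 1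
condition `⟨(1/m)∑ᵢ Hᵢ⁻¹g, Hg⟩ ≥ θ‖g‖²` of DINGO holds at `w`. -/
theorem stmt_6 {d m : ℕ} (hm : 0 < m)
    (f : Fin m → EuclideanSpace ℝ (Fin d) → ℝ)
    (hf : ∀ i, ContDiff ℝ 2 (f i))
    (w : EuclideanSpace ℝ (Fin d))
    (γ ε : Fin m → ℝ) (hγ : ∀ i, 0 < γ i) (hε : ∀ i, 0 ≤ ε i)
    (hinv : ∀ i, IsUnit (hessI (f i) w))
    (hinvnorm : ∀ i, ‖Ring.inverse (hessI (f i) w)‖ ≤ 1 / γ i)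
    (hclose : ∀ i, ‖hessI (f i) w - hessF f w‖ ≤ ε i)
    (θ : ℝ) (hθ : 0 < θ)
    (hsum : θ ≤ (1 / (m : ℝ)) * ∑ i, (1 - ε i / γ i)) :
    θ * ‖gradF f w‖ ^ 2
      ≤ ⟪(1 / (m : ℝ)) • ∑ i, Ring.inverse (hessI (f i) w) (gradF f w),
          hessF f w (gradF f w)⟫ := by
  set g := gradF f w with hg
  set H := hessF f w with hH
  set B : Fin m → (EuclideanSpace ℝ (Fin d) →L[ℝ] EuclideanSpace ℝ (Fin d)) :=
    fun i => Ring.inverse (hessI (f i) w) with hB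
  have hginner : ∀ i, (1 - ε i / γ i) * ‖g‖ ^ 2 ≤ ⟪B i g, H g⟫ := by
    intro i
    have hHi := hinv i
    have hBg : hessI (f i) w (B i g) = g := by
      have h1 : hessI (f i) w * B i = 1 := Ring.mul_inverse_cancel _ hHi
      have := congrArg (fun T => T g) h1
      simpa [ContinuousLinearMap.mul_apply] using this
    have hsym := hess_symm_aux (f i) (hf i) w
    have h2 : ⟪B i g, hessI (f i) w g⟫ = ‖g‖ ^ 2 := by
      have := hsym g (B i g)
      rw [real_inner_comm]
      simp only [hessI] at this hBg ⊢
      rw [this, hBg, real_inner_self_eq_norm_sq]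
    have hsplit : ⟪B i g, H g⟫
        = ⟪B i g, hessI (f i) w g⟫ + ⟪B i g, (H - hessI (f i) w) g⟫ := by
      rw [← inner_add_right]
      congr 1
      simp [ContinuousLinearMap.sub_apply]
    have hnormBg : ‖B i g‖ ≤ (1 / γ i) * ‖g‖ :=
      le_trans (ContinuousLinearMap.le_opNorm _ _)
        (mul_le_mul_of_nonneg_right (hinvnorm i) (norm_nonneg _))
    have h3 : ‖H - hessI (f i) w‖ ≤ ε i := by
      rw [norm_sub_rev]; exact hclose i
    have hnormHg : ‖(H - hessI (f i) w) g‖ ≤ ε i * ‖g‖ :=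
      le_trans (ContinuousLinearMap.le_opNorm _ _)
        (mul_le_mul_of_nonneg_right h3 (norm_nonneg _))
    have hbound : |⟪B i g, (H - hessI (f i) w) g⟫| ≤ (ε i / γ i) * ‖g‖ ^ 2 := by
      calc |⟪B i g, (H - hessI (f i) w) g⟫|
          ≤ ‖B i g‖ * ‖(H - hessI (f i) w) g‖ := abs_real_inner_le_norm _ _
        _ ≤ ((1 / γ i) * ‖g‖) * (ε i * ‖g‖) := by
            exact mul_le_mul hnormBg hnormHg (norm_nonneg _)
              (mul_nonneg (div_pos one_pos (hγ i)).le (norm_nonneg _))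
        _ = (ε i / γ i) * ‖g‖ ^ 2 := by ring
    have hneg := neg_abs_le ⟪B i g, (H - hessI (f i) w) g⟫
    rw [hsplit, h2]
    nlinarith [hbound, hneg]
  have hm' : (0:ℝ) < m := Nat.cast_pos.mpr hm
  have hRHS : ⟪(1 / (m : ℝ)) • ∑ i, B i g, H g⟫
      = (1 / (m : ℝ)) * ∑ i, ⟪B i g, H g⟫ := by
    rw [real_inner_smul_left, sum_inner]
  rw [hRHS]
  have hsum2 : ∑ i, (1 - ε i / γ i) * ‖g‖ ^ 2 ≤ ∑ i, ⟪B i g, H g⟫ :=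
    Finset.sum_le_sum fun i _ => hginner i
  calc θ * ‖g‖ ^ 2
      ≤ ((1 / (m : ℝ)) * ∑ i, (1 - ε i / γ i)) * ‖g‖ ^ 2 :=
        mul_le_mul_of_nonneg_right hsum (sq_nonneg _)
    _ = (1 / (m : ℝ)) * ∑ i, (1 - ε i / γ i) * ‖g‖ ^ 2 := by
        rw [mul_assoc, Finset.sum_mul]
    _ ≤ (1 / (m : ℝ)) * ∑ i, ⟪B i g, H g⟫ :=
        mul_le_mul_of_nonneg_left hsum2 (by positivity)
end

section
/- Let A₁ be an m×n real matrix, A₂ an invertible n×n real matrix, and let A be the (m+n)×n real matrix obtained by stacking A₁ on top of A₂. Then AᵀA is invertible, and the Moore–Penrose pseudoinverse A† = (AᵀA)⁻¹Aᵀ satisfies ‖(AᵀA)⁻¹Aᵀ b‖ ≤ ‖A₂⁻¹‖·‖b‖ for every b ∈ ℝ^{m+n}; equivalently, ‖A†‖ ≤ ‖A₂⁻¹‖ in operator norm. -/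
open Matrix

/-- Reinterpret a plain vector as an element of Euclidean space (so that `‖·‖` is
the Euclidean norm). -/
noncomputable def toEuc {ι : Type*} [Fintype ι] (x : ι → ℝ) : EuclideanSpace ℝ ι := WithLp.toLp 2 x

lemma inner_toEuc {ι : Type*} [Fintype ι] (v w : ι → ℝ) :
    (inner ℝ (toEuc v) (toEuc w) : ℝ) = v ⬝ᵥ w := by
  simp [toEuc, PiLp.inner_apply, dotProduct, RCLike.inner_apply, mul_comm]

lemma dps_nonneg {ι : Type*} [Fintype ι] (v : ι → ℝ) : 0 ≤ v ⬝ᵥ v :=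
  Finset.sum_nonneg fun i _ => mul_self_nonneg _

lemma norm_sq_toEuc {ι : Type*} [Fintype ι] (v : ι → ℝ) :
    ‖toEuc v‖ ^ 2 = v ⬝ᵥ v := by
  rw [← real_inner_self_eq_norm_sq, inner_toEuc]

/-- **Lemma 4 of the paper.** If `A` is obtained by stacking `A₁` on top of an invertible
square matrix `A₂`, then `AᵀA` is invertible and the Moore–Penrose pseudoinverse
`A† = (AᵀA)⁻¹Aᵀ` satisfies `‖A†b‖ ≤ ‖A₂⁻¹‖·‖b‖` for every `b`; i.e. `‖A†‖ ≤ ‖A₂⁻¹‖`. -/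
theorem stmt_8 {m n : ℕ} (hm : 0 < m) (hn : 0 < n)
    (A₁ : Matrix (Fin m) (Fin n) ℝ) (A₂ : Matrix (Fin n) (Fin n) ℝ) (hA₂ : IsUnit A₂)
    (A : Matrix (Fin m ⊕ Fin n) (Fin n) ℝ) (hA : A = Matrix.fromRows A₁ A₂) :
    IsUnit (Aᵀ * A) ∧
    ∀ b : EuclideanSpace ℝ (Fin m ⊕ Fin n),
      ‖toEuc (((Aᵀ * A)⁻¹ * Aᵀ).mulVec b)‖
        ≤ ‖Matrix.toEuclideanCLM (𝕜 := ℝ) A₂⁻¹‖ * ‖b‖ := by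
  -- positive definiteness of A₂ᵀ * A₂
  have hA₂inj : Function.Injective (A₂.mulVec) := mulVec_injective_iff_isUnit.2 hA₂
  have hpos2 : (A₂ᵀ * A₂).PosDef := by
    refine posDef_iff_dotProduct_mulVec.2 ⟨by simpa using isHermitian_conjTranspose_mul_self A₂, fun x hx => ?_⟩
    have hAx : A₂ *ᵥ x ≠ 0 := fun h => hx (hA₂inj (by simpa using h))
    have : star x ⬝ᵥ (A₂ᵀ * A₂) *ᵥ x = (A₂ *ᵥ x) ⬝ᵥ (A₂ *ᵥ x) := by
      rw [← mulVec_mulVec, dotProduct_mulVec, vecMul_transpose, star_trivial]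
    rw [this]
    exact lt_of_le_of_ne (dps_nonneg _) (fun h => hAx (dotProduct_self_eq_zero.mp h.symm))
  have hAA : (Aᵀ * A).PosDef := by
    have hsplit : Aᵀ * A = A₁ᵀ * A₁ + A₂ᵀ * A₂ := by
      rw [hA, transpose_fromRows, fromCols_mul_fromRows]
    rw [hsplit]
    have hpsd1 : (A₁ᵀ * A₁).PosSemidef := by
      simpa using posSemidef_conjTranspose_mul_self A₁
    exact Matrix.PosDef.posSemidef_add hpsd1 hpos2
  refine ⟨hAA.isUnit, fun b => ?_⟩
  set C := ‖Matrix.toEuclideanCLM (𝕜 := ℝ) A₂⁻¹‖ with hC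
  have hC0 : 0 ≤ C := norm_nonneg _
  set x : Fin n → ℝ := ((Aᵀ * A)⁻¹ * Aᵀ).mulVec b with hxdef
  have hdet : IsUnit (Aᵀ * A).det := isUnit_iff_isUnit_det _ |>.mp hAA.isUnit
  -- (1) normal equations
  have h1 : (Aᵀ * A) *ᵥ x = Aᵀ *ᵥ (b : Fin m ⊕ Fin n → ℝ) := by
    rw [hxdef, mulVec_mulVec, ← Matrix.mul_assoc, mul_nonsing_inv _ hdet, Matrix.one_mul]
  -- (2) ‖Ax‖ ≤ ‖b‖
  have h2 : ‖toEuc (A *ᵥ x)‖ ≤ ‖b‖ := by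
    have key : (A *ᵥ x) ⬝ᵥ (A *ᵥ x) = (b : Fin m ⊕ Fin n → ℝ) ⬝ᵥ (A *ᵥ x) := by
      rw [dotProduct_mulVec (A *ᵥ x) A x, ← mulVec_transpose,
        mulVec_mulVec, h1, mulVec_transpose, ← dotProduct_mulVec]
    have hsq : ‖toEuc (A *ᵥ x)‖ ^ 2 = inner ℝ (b : EuclideanSpace ℝ (Fin m ⊕ Fin n)) (toEuc (A *ᵥ x)) := by
      rw [norm_sq_toEuc, key]
      exact (inner_toEuc _ _).symm
    have hle : ‖toEuc (A *ᵥ x)‖ ^ 2 ≤ ‖b‖ * ‖toEuc (A *ᵥ x)‖ := by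
      rw [hsq]; exact real_inner_le_norm _ _
    rcases eq_or_lt_of_le (norm_nonneg (toEuc (A *ᵥ x))) with h0 | h0
    · rw [← h0]; exact norm_nonneg b
    · have := hle
      rw [pow_two] at this
      exact le_of_mul_le_mul_right this h0
  -- (3) ‖A₂ x‖ ≤ ‖A x‖
  have h3 : ‖toEuc (A₂ *ᵥ x)‖ ≤ ‖toEuc (A *ᵥ x)‖ := by
    have hsq : ‖toEuc (A₂ *ᵥ x)‖ ^ 2 ≤ ‖toEuc (A *ᵥ x)‖ ^ 2 := by
      rw [norm_sq_toEuc, norm_sq_toEuc, hA, fromRows_mulVec]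
      have : (Sum.elim (A₁ *ᵥ x) (A₂ *ᵥ x)) ⬝ᵥ (Sum.elim (A₁ *ᵥ x) (A₂ *ᵥ x))
          = (A₁ *ᵥ x) ⬝ᵥ (A₁ *ᵥ x) + (A₂ *ᵥ x) ⬝ᵥ (A₂ *ᵥ x) := by
        simp [dotProduct, Fintype.sum_sum_type]
      rw [this]
      exact le_add_of_nonneg_left (dps_nonneg _)
    nlinarith [hsq, norm_nonneg (toEuc (A₂ *ᵥ x)), norm_nonneg (toEuc (A *ᵥ x))]
  -- (4) ‖x‖ ≤ C * ‖A₂ x‖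
  have hdet2 : IsUnit A₂.det := isUnit_iff_isUnit_det _ |>.mp hA₂
  have h4 : ‖toEuc x‖ ≤ C * ‖toEuc (A₂ *ᵥ x)‖ := by
    have hxeq : x = A₂⁻¹ *ᵥ (A₂ *ᵥ x) := by
      rw [mulVec_mulVec, nonsing_inv_mul _ hdet2, one_mulVec]
    have happ : Matrix.toEuclideanCLM (𝕜 := ℝ) A₂⁻¹ (toEuc (A₂ *ᵥ x)) = toEuc (A₂⁻¹ *ᵥ (A₂ *ᵥ x)) := rfl
    calc ‖toEuc x‖ = ‖Matrix.toEuclideanCLM (𝕜 := ℝ) A₂⁻¹ (toEuc (A₂ *ᵥ x))‖ := by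
          rw [happ, ← hxeq]
      _ ≤ C * ‖toEuc (A₂ *ᵥ x)‖ := ContinuousLinearMap.le_opNorm _ _
  calc ‖toEuc x‖ ≤ C * ‖toEuc (A₂ *ᵥ x)‖ := h4
    _ ≤ C * ‖toEuc (A *ᵥ x)‖ := by exact mul_le_mul_of_nonneg_left h3 hC0
    _ ≤ C * ‖b‖ := mul_le_mul_of_nonneg_left h2 hC0
end

section
/- (Convergence under Case 2.) Suppose Assumption 1 holds. Fix w ∈ ℝ^d, set g = ∇f(w), H = ∇²f(w) and H_i = ∇²f_i(w); fix any G ≥ ‖g‖ and set L = ((1/m)∑_{i=1}^m K_i)² + ((1/m)∑_{i=1}^m L_i)·G. Let φ > 0, for each i let p_i = −(H_i² + φ²I)⁻¹H_i g, let p = (1/m)∑_{i=1}^m p_i, and suppose the Case 2 condition ⟨p, Hg⟩ ≤ −θ‖g‖² holds for some θ > 0. Let ρ ∈ (0,1) and τ₂ = 2(1−ρ)φ²θ/L. Then for every α ∈ (0, τ₂]: ‖∇f(w + αp)‖² ≤ ‖g‖² + 2αρ⟨p, Hg⟩ ≤ (1 − 2αρθ)‖g‖²; in particular ‖∇f(w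 + τ₂p)‖² ≤ (1 − 2τ₂ρθ)‖g‖². Moreover, if g ≠ 0 then necessarily θ ≤ √L/φ, which implies 0 ≤ 1 − 2τ₂ρθ < 1. -/
open scoped RealInnerProductSpace

/-- The regularized operator `H̃ᵀH̃ = H² + φ²I`. -/
noncomputable def Mreg {d : ℕ}
    (H : EuclideanSpace ℝ (Fin d) →L[ℝ] EuclideanSpace ℝ (Fin d)) (φ : ℝ) :
    EuclideanSpace ℝ (Fin d) →L[ℝ] EuclideanSpace ℝ (Fin d) :=
  H * H + φ ^ 2 • 1

section DingoAux

open InnerProductSpace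

variable {d m : ℕ}

noncomputable def dingoDualE {d : ℕ} :
    (EuclideanSpace ℝ (Fin d) →L[ℝ] ℝ) ≃L[ℝ] EuclideanSpace ℝ (Fin d) :=
  (InnerProductSpace.toDual ℝ (EuclideanSpace ℝ (Fin d))).symm.toContinuousLinearEquiv

lemma dingo_grad_eq (f : EuclideanSpace ℝ (Fin d) → ℝ) :
    gradient f = fun x => dingoDualE (fderiv ℝ f x) := rfl

lemma dingo_contDiff_grad (f : EuclideanSpace ℝ (Fin d) → ℝ) (hf : ContDiff ℝ 2 f) :
    ContDiff ℝ 1 (gradient f) := by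
  rw [dingo_grad_eq]
  exact (dingoDualE.contDiff).comp (hf.fderiv_right (by norm_num))

lemma dingo_inner_dualE (v : EuclideanSpace ℝ (Fin d)) (L : EuclideanSpace ℝ (Fin d) →L[ℝ] ℝ) :
    ⟪dingoDualE L, v⟫ = L v := by
  simp [dingoDualE]

lemma dingo_diff_grad (f : EuclideanSpace ℝ (Fin d) → ℝ) (hf : ContDiff ℝ 2 f)
    (x : EuclideanSpace ℝ (Fin d)) : DifferentiableAt ℝ (gradient f) x :=
  ((dingo_contDiff_grad f hf).differentiable (by norm_num)) x

lemma dingo_diff_fderiv (f : EuclideanSpace ℝ (Fin d) → ℝ) (hf : ContDiff ℝ 2 f)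
    (x : EuclideanSpace ℝ (Fin d)) : DifferentiableAt ℝ (fderiv ℝ f) x :=
  ((hf.fderiv_right (by norm_num : (1:WithTop ℕ∞) + 1 ≤ 2)).differentiable (by norm_num)) x

lemma dingo_hess_eq (f : EuclideanSpace ℝ (Fin d) → ℝ) (hf : ContDiff ℝ 2 f)
    (w : EuclideanSpace ℝ (Fin d)) :
    fderiv ℝ (gradient f) w = (dingoDualE.toContinuousLinearMap).comp (fderiv ℝ (fderiv ℝ f) w) := by
  rw [dingo_grad_eq]
  rw [fderiv_comp' w (dingoDualE.differentiableAt) (dingo_diff_fderiv f hf w)]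
  congr 1
  exact dingoDualE.fderiv

lemma dingo_hess_apply (f : EuclideanSpace ℝ (Fin d) → ℝ) (hf : ContDiff ℝ 2 f)
    (w u v : EuclideanSpace ℝ (Fin d)) :
    ⟪fderiv ℝ (gradient f) w u, v⟫ = fderiv ℝ (fderiv ℝ f) w u v := by
  rw [dingo_hess_eq f hf w]
  exact dingo_inner_dualE v _

lemma dingo_hess_symm (f : EuclideanSpace ℝ (Fin d) → ℝ) (hf : ContDiff ℝ 2 f)
    (w u v : EuclideanSpace ℝ (Fin d)) :
    ⟪fderiv ℝ (gradient f) w u, v⟫ = ⟪fderiv ℝ (gradient f) w v, u⟫ := by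
  rw [dingo_hess_apply f hf w u v, dingo_hess_apply f hf w v u]
  exact (hf.contDiffAt.isSymmSndFDerivAt (by simp)) u v

lemma dingo_hasfderiv_avg (f : Fin m → EuclideanSpace ℝ (Fin d) → ℝ)
    (hf : ∀ i, ContDiff ℝ 2 (f i)) (x : EuclideanSpace ℝ (Fin d)) :
    HasFDerivAt (avgFun f) ((1 / (m:ℝ)) • ∑ i, fderiv ℝ (f i) x) x := by
  have h : ∀ i : Fin m, HasFDerivAt (f i) (fderiv ℝ (f i) x) x :=
    fun i => ((hf i).differentiable (by norm_num) x).hasFDerivAt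
  have hs : HasFDerivAt (fun w => ∑ i, f i w) (∑ i, fderiv ℝ (f i) x) x :=
    HasFDerivAt.fun_sum (fun i _ => h i)
  unfold avgFun
  have := hs.const_smul (1 / (m:ℝ))
  exact hs.const_mul (1 / (m:ℝ))

lemma dingo_contDiff_avg (f : Fin m → EuclideanSpace ℝ (Fin d) → ℝ)
    (hf : ∀ i, ContDiff ℝ 2 (f i)) : ContDiff ℝ 2 (avgFun f) := by
  unfold avgFun
  exact contDiff_const.mul (ContDiff.sum fun i _ => hf i)

lemma dingo_grad_avg (f : Fin m → EuclideanSpace ℝ (Fin d) → ℝ)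
    (hf : ∀ i, ContDiff ℝ 2 (f i)) (x : EuclideanSpace ℝ (Fin d)) :
    gradient (avgFun f) x = (1 / (m:ℝ)) • ∑ i, gradient (f i) x := by
  have h1 : fderiv ℝ (avgFun f) x = (1 / (m:ℝ)) • ∑ i, fderiv ℝ (f i) x :=
    (dingo_hasfderiv_avg f hf x).fderiv
  show (toDual ℝ (EuclideanSpace ℝ (Fin d))).symm (fderiv ℝ (avgFun f) x) = _
  rw [h1, map_smul, map_sum]
  rfl

lemma dingo_hess_avg (f : Fin m → EuclideanSpace ℝ (Fin d) → ℝ)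
    (hf : ∀ i, ContDiff ℝ 2 (f i)) (x : EuclideanSpace ℝ (Fin d)) :
    fderiv ℝ (gradient (avgFun f)) x = (1 / (m:ℝ)) • ∑ i, fderiv ℝ (gradient (f i)) x := by
  have hfun : gradient (avgFun f) = fun y => (1 / (m:ℝ)) • ∑ i, gradient (f i) y :=
    funext (dingo_grad_avg f hf)
  rw [hfun]
  have hs : HasFDerivAt (fun y => ∑ i, gradient (f i) y) (∑ i, fderiv ℝ (gradient (f i)) x) x :=
    HasFDerivAt.fun_sum (fun i _ => (dingo_diff_grad (f i) (hf i) x).hasFDerivAt)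
  exact (hs.const_smul (1 / (m:ℝ))).fderiv

lemma Mreg_apply {d : ℕ} (H : EuclideanSpace ℝ (Fin d) →L[ℝ] EuclideanSpace ℝ (Fin d))
    (φ : ℝ) (x : EuclideanSpace ℝ (Fin d)) :
    Mreg H φ x = H (H x) + φ ^ 2 • x := by
  simp [Mreg, ContinuousLinearMap.mul_apply]

lemma Mreg_inner {d : ℕ} (H : EuclideanSpace ℝ (Fin d) →L[ℝ] EuclideanSpace ℝ (Fin d))
    (hsym : ∀ u v : EuclideanSpace ℝ (Fin d), ⟪H u, v⟫ = ⟪u, H v⟫) (φ : ℝ)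
    (x : EuclideanSpace ℝ (Fin d)) :
    ⟪Mreg H φ x, x⟫ = ‖H x‖ ^ 2 + φ ^ 2 * ‖x‖ ^ 2 := by
  rw [Mreg_apply, inner_add_left, real_inner_smul_left, hsym (H x) x,
    real_inner_self_eq_norm_sq, real_inner_self_eq_norm_sq]

lemma Mreg_isUnit {d : ℕ} (H : EuclideanSpace ℝ (Fin d) →L[ℝ] EuclideanSpace ℝ (Fin d))
    (hsym : ∀ u v : EuclideanSpace ℝ (Fin d), ⟪H u, v⟫ = ⟪u, H v⟫)
    {φ : ℝ} (hφ : 0 < φ) : IsUnit (Mreg H φ) := by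
  have hinj : Function.Injective (Mreg H φ) := by
    intro x y hxy
    have h0 : Mreg H φ (x - y) = 0 := by rw [map_sub, hxy, sub_self]
    have h1 : ⟪Mreg H φ (x - y), x - y⟫ = 0 := by rw [h0]; simp
    rw [Mreg_inner H hsym] at h1
    have hx : ‖x - y‖ ^ 2 = 0 := by
      nlinarith [sq_nonneg ‖H (x-y)‖, sq_nonneg ‖x-y‖, sq_nonneg φ, mul_pos hφ hφ]
    have : x - y = 0 := by
      have := pow_eq_zero_iff (n := 2) (by norm_num) |>.mp hx
      exact norm_eq_zero.mp this
    exact sub_eq_zero.mp this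
  have hbij : Function.Bijective ((Mreg H φ).toLinearMap) :=
    ⟨hinj, (LinearMap.injective_iff_surjective).mp hinj⟩
  let e : EuclideanSpace ℝ (Fin d) ≃ₗ[ℝ] EuclideanSpace ℝ (Fin d) :=
    LinearEquiv.ofBijective (Mreg H φ).toLinearMap hbij
  let e' := e.toContinuousLinearEquiv
  have he' : ∀ z, e' z = Mreg H φ z := fun z => rfl
  refine isUnit_iff_exists.mpr ⟨(e'.symm : EuclideanSpace ℝ (Fin d) →L[ℝ] EuclideanSpace ℝ (Fin d)), ?_, ?_⟩ <;>
  · refine ContinuousLinearMap.ext fun x => ?_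
    simp only [ContinuousLinearMap.mul_apply, ContinuousLinearMap.one_apply,
      ContinuousLinearMap.coe_coe]
    first
      | rw [← he']; exact e'.apply_symm_apply x
      | rw [← he']; exact e'.symm_apply_apply x

lemma Mreg_inverse_apply {d : ℕ} (H : EuclideanSpace ℝ (Fin d) →L[ℝ] EuclideanSpace ℝ (Fin d))
    (hsym : ∀ u v : EuclideanSpace ℝ (Fin d), ⟪H u, v⟫ = ⟪u, H v⟫)
    {φ : ℝ} (hφ : 0 < φ) (v : EuclideanSpace ℝ (Fin d)) :
    Mreg H φ (Ring.inverse (Mreg H φ) v) = v := by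
  have h := Ring.mul_inverse_cancel (Mreg H φ) (Mreg_isUnit H hsym hφ)
  calc Mreg H φ (Ring.inverse (Mreg H φ) v) = (Mreg H φ * Ring.inverse (Mreg H φ)) v := rfl
    _ = v := by rw [h]; rfl

lemma dingo_pnorm_bound {d : ℕ} (H : EuclideanSpace ℝ (Fin d) →L[ℝ] EuclideanSpace ℝ (Fin d))
    (hsym : ∀ u v : EuclideanSpace ℝ (Fin d), ⟪H u, v⟫ = ⟪u, H v⟫)
    {φ : ℝ} (hφ : 0 < φ) (g : EuclideanSpace ℝ (Fin d)) :
    ‖(Ring.inverse (Mreg H φ)) (H g)‖ ≤ ‖g‖ / (2 * φ) := by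
  set q := (Ring.inverse (Mreg H φ)) (H g) with hq
  have hMq : Mreg H φ q = H g := Mreg_inverse_apply H hsym hφ (H g)
  have h1 : ‖H q‖ ^ 2 + φ ^ 2 * ‖q‖ ^ 2 = ⟪g, H q⟫ := by
    rw [← Mreg_inner H hsym φ q, hMq, ← hsym]
  have h2 : ⟪g, H q⟫ ≤ ‖g‖ * ‖H q‖ := real_inner_le_norm g (H q)
  have h3 : ‖H q‖ ^ 2 + φ ^ 2 * ‖q‖ ^ 2 ≤ ‖g‖ * ‖H q‖ := h1.le.trans h2
  rcases eq_or_lt_of_le (norm_nonneg (H q)) with h4 | h4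
  · rw [← h4] at h3
    have hq0 : ‖q‖ = 0 := by
      by_contra hne
      have hqpos : 0 < ‖q‖ ^ 2 := by positivity
      nlinarith [mul_pos (by positivity : (0:ℝ) < φ ^ 2) hqpos]
    rw [hq0]
    positivity
  · rw [div_eq_inv_mul, ← mul_le_mul_iff_right₀ (by positivity : (0:ℝ) < 2 * φ)]
    have key : (2 * φ * ‖q‖) * ‖H q‖ ≤ ‖g‖ * ‖H q‖ := by
      nlinarith [sq_nonneg (‖H q‖ - φ * ‖q‖)]
    have := (mul_le_mul_iff_left₀ h4).mp key
    calc 2 * φ * ‖q‖ ≤ ‖g‖ := this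
      _ = 2 * φ * ((2*φ)⁻¹ * ‖g‖) := by field_simp

end DingoAux

set_option maxHeartbeats 1000000 in
/-- **Theorem 3 (Convergence under Case 2).** Under Assumption 1, with exact local directions
`pᵢ = −(Hᵢ² + φ²I)⁻¹Hᵢg`, if the Case 2 descent condition holds, every step-size in
`(0, τ₂]` with `τ₂ = 2(1−ρ)φ²θ/L` passes the line search and yields the stated reduction;
moreover if `g ≠ 0` then `θ ≤ √L/φ`, whence `0 ≤ 1 − 2τ₂ρθ < 1`. -/
theorem stmt_10 {d m : ℕ} (hm : 0 < m)
    (f : Fin m → EuclideanSpace ℝ (Fin d) → ℝ)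
    (hf : ∀ i, ContDiff ℝ 2 (f i))
    (K L : Fin m → ℝ) (hK : ∀ i, 0 < K i) (hL : ∀ i, 0 < L i)
    (hgrad : ∀ i (x y : EuclideanSpace ℝ (Fin d)),
      ‖gradient (f i) x - gradient (f i) y‖ ≤ K i * ‖x - y‖)
    (hhess : ∀ i (x y : EuclideanSpace ℝ (Fin d)),
      ‖hessI (f i) x - hessI (f i) y‖ ≤ L i * ‖x - y‖)
    (w : EuclideanSpace ℝ (Fin d)) (G : ℝ) (hG : ‖gradF f w‖ ≤ G)
    (ρ θ φ : ℝ) (hρ0 : 0 < ρ) (hρ1 : ρ < 1) (hθ : 0 < θ) (hφ : 0 < φ)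
    -- the exact Case 2 local directions pᵢ = −(Hᵢ² + φ²I)⁻¹Hᵢg
    (p : Fin m → EuclideanSpace ℝ (Fin d))
    (hp : ∀ i, p i = -(Ring.inverse (Mreg (hessI (f i) w) φ) (hessI (f i) w (gradF f w))))
    (pbar : EuclideanSpace ℝ (Fin d)) (hpbar : pbar = (1 / (m : ℝ)) • ∑ i, p i)
    -- the Case 2 condition ⟨p, Hg⟩ ≤ −θ‖g‖²
    (hcase : ⟪pbar, hessF f w (gradF f w)⟫ ≤ -θ * ‖gradF f w‖ ^ 2)
    (τ : ℝ) (hτ : τ = 2 * (1 - ρ) * φ ^ 2 * θ / Lconst K L G) :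
    (∀ α : ℝ, 0 < α → α ≤ τ →
      ‖gradF f (w + α • pbar)‖ ^ 2
          ≤ ‖gradF f w‖ ^ 2 + 2 * α * ρ * ⟪pbar, hessF f w (gradF f w)⟫ ∧
      ‖gradF f w‖ ^ 2 + 2 * α * ρ * ⟪pbar, hessF f w (gradF f w)⟫
          ≤ (1 - 2 * α * ρ * θ) * ‖gradF f w‖ ^ 2) ∧
    ‖gradF f (w + τ • pbar)‖ ^ 2 ≤ (1 - 2 * τ * ρ * θ) * ‖gradF f w‖ ^ 2 ∧
    (gradF f w ≠ 0 →
      θ ≤ Real.sqrt (Lconst K L G) / φ ∧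
      0 ≤ 1 - 2 * τ * ρ * θ ∧ 1 - 2 * τ * ρ * θ < 1) := by
  classical
  have hfavg : ContDiff ℝ 2 (avgFun f) := dingo_contDiff_avg f hf
  set Kb := (1 / (m:ℝ)) * ∑ i, K i with hKbdef
  set Lb := (1 / (m:ℝ)) * ∑ i, L i with hLbdef
  have hm' : (0:ℝ) < m := Nat.cast_pos.mpr hm
  have hKb : 0 < Kb :=
    mul_pos (by positivity) (Finset.sum_pos (fun i _ => hK i) ⟨⟨0, hm⟩, Finset.mem_univ _⟩)
  have hLb : 0 < Lb :=
    mul_pos (by positivity) (Finset.sum_pos (fun i _ => hL i) ⟨⟨0, hm⟩, Finset.mem_univ _⟩)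
  have hLcdef : Lconst K L G = Kb ^ 2 + Lb * G := rfl
  have hG0 : 0 ≤ G := le_trans (norm_nonneg _) hG
  have hLc : 0 < Lconst K L G := by
    rw [hLcdef]; nlinarith [mul_nonneg hLb.le hG0]
  have hτ0 : 0 < τ := by
    rw [hτ]
    apply div_pos _ hLc
    have h1ρ : (0:ℝ) < 1 - ρ := by linarith
    positivity
  -- Lipschitz continuity of the averaged gradient
  have gradLip : ∀ x y : EuclideanSpace ℝ (Fin d),
      ‖gradient (avgFun f) x - gradient (avgFun f) y‖ ≤ Kb * ‖x - y‖ := by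
    intro x y
    rw [dingo_grad_avg f hf x, dingo_grad_avg f hf y, ← smul_sub, ← Finset.sum_sub_distrib]
    rw [norm_smul, Real.norm_eq_abs, abs_of_pos (show (0:ℝ) < 1 / (m:ℝ) by positivity)]
    have h1 : ‖∑ i, (gradient (f i) x - gradient (f i) y)‖ ≤ ∑ i, K i * ‖x - y‖ :=
      (norm_sum_le _ _).trans (Finset.sum_le_sum fun i _ => hgrad i x y)
    calc (1 / (m:ℝ)) * ‖∑ i, (gradient (f i) x - gradient (f i) y)‖
        ≤ (1 / (m:ℝ)) * ((∑ i, K i) * ‖x - y‖) := by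
          apply mul_le_mul_of_nonneg_left _ (by positivity)
          rw [Finset.sum_mul]; exact h1
      _ = Kb * ‖x - y‖ := by rw [hKbdef]; ring
  -- Lipschitz continuity of the averaged Hessian
  have hessLip : ∀ x y : EuclideanSpace ℝ (Fin d),
      ‖fderiv ℝ (gradient (avgFun f)) x - fderiv ℝ (gradient (avgFun f)) y‖ ≤ Lb * ‖x - y‖ := by
    intro x y
    rw [dingo_hess_avg f hf x, dingo_hess_avg f hf y]; erw [← smul_sub]; rw [← Finset.sum_sub_distrib]
    rw [norm_smul, Real.norm_eq_abs, abs_of_pos (show (0:ℝ) < 1 / (m:ℝ) by positivity)]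
    have h1 : ‖∑ i, (fderiv ℝ (gradient (f i)) x - fderiv ℝ (gradient (f i)) y)‖
        ≤ ∑ i, L i * ‖x - y‖ :=
      (norm_sum_le _ _).trans (Finset.sum_le_sum fun i _ => hhess i x y)
    calc (1 / (m:ℝ)) * ‖∑ i, (fderiv ℝ (gradient (f i)) x - fderiv ℝ (gradient (f i)) y)‖
        ≤ (1 / (m:ℝ)) * ((∑ i, L i) * ‖x - y‖) := by
          apply mul_le_mul_of_nonneg_left _ (by positivity)
          rw [Finset.sum_mul]; exact h1
      _ = Lb * ‖x - y‖ := by rw [hLbdef]; ring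
  -- norm bound on the Hessian
  have Hnorm : ‖hessF f w‖ ≤ Kb := by
    apply norm_fderiv_le_of_lip' ℝ hKb.le
    exact Filter.Eventually.of_forall fun x => gradLip x w
  -- symmetry of the Hessians
  have Hsym : ∀ u v : EuclideanSpace ℝ (Fin d),
      ⟪hessF f w u, v⟫ = ⟪hessF f w v, u⟫ := dingo_hess_symm (avgFun f) hfavg w
  have Hisym : ∀ i, ∀ u v : EuclideanSpace ℝ (Fin d),
      ⟪hessI (f i) w u, v⟫ = ⟪u, hessI (f i) w v⟫ := by
    intro i u v
    exact (dingo_hess_symm (f i) (hf i) w u v).trans (real_inner_comm _ _)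
  -- bound on the local directions
  have pbound : ∀ i, ‖p i‖ ≤ ‖gradF f w‖ / (2 * φ) := by
    intro i
    rw [hp i, norm_neg]
    exact dingo_pnorm_bound (hessI (f i) w) (Hisym i) hφ (gradF f w)
  have pbarbound : ‖pbar‖ ≤ ‖gradF f w‖ / (2 * φ) := by
    rw [hpbar, norm_smul, Real.norm_eq_abs, abs_of_pos (show (0:ℝ) < 1 / (m:ℝ) by positivity)]
    calc (1 / (m:ℝ)) * ‖∑ i, p i‖ ≤ (1 / (m:ℝ)) * ∑ i, ‖p i‖ := by
          exact mul_le_mul_of_nonneg_left (norm_sum_le _ _) (by positivity)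
      _ ≤ (1 / (m:ℝ)) * ∑ _i : Fin m, (‖gradF f w‖ / (2 * φ)) := by
          exact mul_le_mul_of_nonneg_left (Finset.sum_le_sum fun i _ => pbound i) (by positivity)
      _ = ‖gradF f w‖ / (2 * φ) := by
          rw [Finset.sum_const, Finset.card_univ, Fintype.card_fin, nsmul_eq_mul]
          field_simp
  -- the key consequence θ ≤ Kb / (2φ) when g ≠ 0
  have hθK : gradF f w ≠ 0 → 2 * φ * θ ≤ Kb := by
    intro hgne
    have hgn : 0 < ‖gradF f w‖ := norm_pos_iff.mpr hgne
    have hHg : ‖hessF f w (gradF f w)‖ ≤ Kb * ‖gradF f w‖ :=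
      ((hessF f w).le_opNorm _).trans (mul_le_mul_of_nonneg_right Hnorm (norm_nonneg _))
    have h1 : θ * ‖gradF f w‖ ^ 2 ≤ -⟪pbar, hessF f w (gradF f w)⟫ := by linarith [hcase]
    have h2 : -⟪pbar, hessF f w (gradF f w)⟫ ≤ ‖pbar‖ * ‖hessF f w (gradF f w)‖ := by
      have := abs_real_inner_le_norm pbar (hessF f w (gradF f w))
      have := neg_abs_le (⟪pbar, hessF f w (gradF f w)⟫)
      linarith
    have h3 : θ * ‖gradF f w‖ ^ 2 ≤ (‖gradF f w‖ / (2 * φ)) * (Kb * ‖gradF f w‖) := by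
      calc θ * ‖gradF f w‖ ^ 2 ≤ ‖pbar‖ * ‖hessF f w (gradF f w)‖ := h1.trans h2
        _ ≤ (‖gradF f w‖ / (2 * φ)) * (Kb * ‖gradF f w‖) :=
            mul_le_mul pbarbound hHg (norm_nonneg _) (by positivity)
    have h4 : (2 * φ * θ) * ‖gradF f w‖ ^ 2 ≤ Kb * ‖gradF f w‖ ^ 2 := by
      have h6 := mul_le_mul_of_nonneg_left h3 (show (0:ℝ) ≤ 2 * φ by positivity)
      have heq : (2 * φ) * ((‖gradF f w‖ / (2 * φ)) * (Kb * ‖gradF f w‖))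
          = Kb * ‖gradF f w‖ ^ 2 := by
        field_simp
      nlinarith [h6, heq]
    exact le_of_mul_le_mul_right (by nlinarith [h4]) (by positivity : (0:ℝ) < ‖gradF f w‖ ^ 2)
  -- the main claim
  have claim1 : ∀ α : ℝ, 0 < α → α ≤ τ →
      ‖gradF f (w + α • pbar)‖ ^ 2
          ≤ ‖gradF f w‖ ^ 2 + 2 * α * ρ * ⟪pbar, hessF f w (gradF f w)⟫ ∧
      ‖gradF f w‖ ^ 2 + 2 * α * ρ * ⟪pbar, hessF f w (gradF f w)⟫
          ≤ (1 - 2 * α * ρ * θ) * ‖gradF f w‖ ^ 2 := by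
    intro α hα hατ
    by_cases hg0 : gradF f w = 0
    · have hpz : ∀ i, p i = 0 := by
        intro i
        rw [hp i, hg0, map_zero, map_zero, neg_zero]
      have hpb0 : pbar = 0 := by
        rw [hpbar]
        simp [hpz]
      rw [hpb0]
      simp [hg0]
    · -- main case
      have hgn : 0 < ‖gradF f w‖ := norm_pos_iff.mpr hg0
      set gn := ‖gradF f w‖ with hgndef
      set b := ‖pbar‖ with hbdef
      have hb0 : 0 ≤ b := norm_nonneg _
      set u := α • pbar with hudef
      have hnu : ‖u‖ = α * b := by
        rw [hudef, norm_smul, Real.norm_eq_abs, abs_of_pos hα]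
      -- Taylor bound
      have hTay : ‖gradF f (w + u) - gradF f w - hessF f w u‖ ≤ Lb * ‖u‖ * ‖u‖ := by
        have hconv : Convex ℝ (Metric.closedBall w ‖u‖) := convex_closedBall _ _
        have hdiff : ∀ x ∈ Metric.closedBall w ‖u‖,
            DifferentiableAt ℝ (gradient (avgFun f)) x :=
          fun x _ => dingo_diff_grad (avgFun f) hfavg x
        have hbound : ∀ x ∈ Metric.closedBall w ‖u‖,
            ‖fderiv ℝ (gradient (avgFun f)) x - hessF f w‖ ≤ Lb * ‖u‖ := by
          intro x hx
          refine (hessLip x w).trans ?_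
          apply mul_le_mul_of_nonneg_left _ hLb.le
          rw [Metric.mem_closedBall, dist_eq_norm] at hx
          exact hx
        have hmem1 : w ∈ Metric.closedBall w ‖u‖ := by
          rw [Metric.mem_closedBall, dist_self]; exact norm_nonneg _
        have hmem2 : w + u ∈ Metric.closedBall w ‖u‖ := by
          rw [Metric.mem_closedBall, dist_eq_norm, add_sub_cancel_left]
        have := hconv.norm_image_sub_le_of_norm_fderiv_le' hdiff hbound hmem1 hmem2
        rw [add_sub_cancel_left] at this
        exact this
      set Hp := hessF f w pbar with hHpdef
      have hHu : hessF f w u = α • Hp := by rw [hudef, map_smul, hHpdef]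
      set gy := gradF f (w + u) with hgydef
      set r := gy - gradF f w - α • Hp with hrdef
      have hr : ‖r‖ ≤ Lb * (α * b) * (α * b) := by
        rw [hrdef, ← hHu]
        calc ‖gy - gradF f w - hessF f w u‖ ≤ Lb * ‖u‖ * ‖u‖ := hTay
          _ = Lb * (α * b) * (α * b) := by rw [hnu]
      have hgyg : ‖gy - gradF f w‖ ≤ Kb * (α * b) := by
        calc ‖gy - gradF f w‖ ≤ Kb * ‖(w + u) - w‖ := gradLip (w + u) w
          _ = Kb * (α * b) := by rw [add_sub_cancel_left, hnu]
      have hHpnorm : ‖Hp‖ ≤ Kb * b := by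
        rw [hHpdef]
        exact ((hessF f w).le_opNorm _).trans (mul_le_mul_of_nonneg_right Hnorm (norm_nonneg _))
      -- decomposition identity
      have hdec : gy - gradF f w = α • Hp + r := by rw [hrdef]; abel
      have hid : ⟪gy - gradF f w, gy + gradF f w⟫ = ‖gy‖ ^ 2 - gn ^ 2 := by
        rw [inner_sub_left, inner_add_right, inner_add_right,
          real_inner_self_eq_norm_sq, real_inner_self_eq_norm_sq,
          real_inner_comm (gradF f w) gy]
        ring
      have e1 : ⟪gy - gradF f w, gy + gradF f w⟫
          = α * ⟪Hp, gy + gradF f w⟫ + ⟪r, gy + gradF f w⟫ := by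
        rw [hdec, inner_add_left, real_inner_smul_left]
      have e2 : ⟪Hp, gy + gradF f w⟫
          = ⟪Hp, gy - gradF f w⟫ + 2 * ⟪Hp, gradF f w⟫ := by
        rw [inner_add_right, inner_sub_right]; ring
      have e3 : ⟪Hp, gradF f w⟫ = ⟪pbar, hessF f w (gradF f w)⟫ := by
        rw [hHpdef, Hsym pbar (gradF f w)]
        exact real_inner_comm _ _
      have hsub : ‖gy‖ ^ 2 - gn ^ 2 = 2 * α * ⟪pbar, hessF f w (gradF f w)⟫
          + (α * ⟪Hp, gy - gradF f w⟫ + ⟪r, gy + gradF f w⟫) := by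
        rw [← hid, e1, e2, e3]
        ring
      -- error bounds
      have err1 : α * ⟪Hp, gy - gradF f w⟫ ≤ α * ((Kb * b) * (Kb * (α * b))) := by
        apply mul_le_mul_of_nonneg_left _ hα.le
        calc ⟪Hp, gy - gradF f w⟫ ≤ ‖Hp‖ * ‖gy - gradF f w‖ := real_inner_le_norm _ _
          _ ≤ (Kb * b) * (Kb * (α * b)) :=
            mul_le_mul hHpnorm hgyg (norm_nonneg _) (by positivity)
      have hgysum : ‖gy + gradF f w‖ ≤ Kb * (α * b) + 2 * gn := by
        have h9 : ‖gradF f w + gradF f w‖ ≤ 2 * gn := by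
          calc ‖gradF f w + gradF f w‖ ≤ gn + gn := norm_add_le _ _
            _ = 2 * gn := by ring
        calc ‖gy + gradF f w‖ = ‖(gy - gradF f w) + (gradF f w + gradF f w)‖ := by
              congr 1; abel
          _ ≤ ‖gy - gradF f w‖ + ‖gradF f w + gradF f w‖ := norm_add_le _ _
          _ ≤ Kb * (α * b) + 2 * gn := add_le_add hgyg h9
      have err2 : ⟪r, gy + gradF f w⟫ ≤ (Lb * (α * b) * (α * b)) * (Kb * (α * b) + 2 * gn) := by
        calc ⟪r, gy + gradF f w⟫ ≤ ‖r‖ * ‖gy + gradF f w‖ := real_inner_le_norm _ _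
          _ ≤ (Lb * (α * b) * (α * b)) * (Kb * (α * b) + 2 * gn) := by
              apply mul_le_mul hr hgysum (norm_nonneg _) (by positivity)
      -- arithmetic
      set s := α * b with hsdef
      have hs0 : 0 ≤ s := by positivity
      have hθ2φ : 2 * φ * θ ≤ Kb := hθK hg0
      have hφθ : (0:ℝ) ≤ φ * θ := by positivity
      have h1ρ : (0:ℝ) < 1 - ρ := by linarith
      have key3 : Kb ^ 2 ≤ Lconst K L G := by
        rw [hLcdef]
        linarith only [mul_nonneg hLb.le hG0]
      have key4 : Lb * gn ≤ Lconst K L G := by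
        rw [hLcdef]
        linarith only [mul_le_mul_of_nonneg_left hG hLb.le, sq_nonneg Kb]
      have key5 : 2 * φ * b ≤ gn := by
        have h := (le_div_iff₀ (by positivity : (0:ℝ) < 2 * φ)).mp pbarbound
        linarith only [h]
      have hαLc : α * Lconst K L G ≤ 2 * (1 - ρ) * φ ^ 2 * θ := by
        rw [hτ] at hατ
        exact (le_div_iff₀ hLc).mp hατ
      have key1 : Lconst K L G * s ≤ (1 - ρ) * φ * θ * gn := by
        have ha : α * Lconst K L G * b ≤ 2 * (1 - ρ) * φ ^ 2 * θ * b :=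
          mul_le_mul_of_nonneg_right hαLc hb0
        have hb2 : (1 - ρ) * φ * θ * (2 * φ * b) ≤ (1 - ρ) * φ * θ * gn := by
          apply mul_le_mul_of_nonneg_left key5
          positivity
        rw [hsdef]
        nlinarith only [ha, hb2]
      have h2φs : 2 * φ * s ≤ α * gn := by
        rw [hsdef]
        nlinarith only [mul_le_mul_of_nonneg_left key5 hα.le]
      have hT0 : 0 ≤ α * (1 - ρ) * θ * gn ^ 2 := by positivity
      have hterm1 : Kb ^ 2 * s ^ 2 ≤ α * (1 - ρ) * θ * gn ^ 2 / 2 := by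
        have i1 : Kb ^ 2 * s ^ 2 ≤ Lconst K L G * s * s := by
          nlinarith only [mul_le_mul_of_nonneg_right key3 (sq_nonneg s)]
        have i2 : Lconst K L G * s * s ≤ ((1 - ρ) * φ * θ * gn) * s :=
          mul_le_mul_of_nonneg_right key1 hs0
        have i3 : ((1 - ρ) * θ * gn / 2) * (2 * φ * s) ≤ ((1 - ρ) * θ * gn / 2) * (α * gn) := by
          apply mul_le_mul_of_nonneg_left h2φs
          positivity
        nlinarith only [i1, i2, i3]
      have hterm2 : 2 * Lb * gn * s ^ 2 ≤ α * (1 - ρ) * θ * gn ^ 2 := by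
        have i1 : Lb * gn * s ^ 2 ≤ Lconst K L G * s * s := by
          nlinarith only [mul_le_mul_of_nonneg_right key4 (sq_nonneg s)]
        have i2 : Lconst K L G * s * s ≤ ((1 - ρ) * φ * θ * gn) * s :=
          mul_le_mul_of_nonneg_right key1 hs0
        have i3 : ((1 - ρ) * θ * gn) * (2 * φ * s) ≤ ((1 - ρ) * θ * gn) * (α * gn) := by
          apply mul_le_mul_of_nonneg_left h2φs
          positivity
        nlinarith only [i1, i2, i3]
      have hterm3 : Lb * Kb * s ^ 3 ≤ α * (1 - ρ) * θ * gn ^ 2 / 4 := by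
        have j0 : (1 - ρ) * φ * θ * gn ≤ φ * θ * G := by
          nlinarith only [mul_le_mul_of_nonneg_left hG hφθ,
            mul_nonneg hρ0.le (mul_nonneg hφθ hgn.le)]
        have j0' : φ * θ * G ≤ Kb * G / 2 := by
          nlinarith only [mul_le_mul_of_nonneg_right hθ2φ hG0]
        have j1 : Lconst K L G * s ≤ Kb * G / 2 := by
          linarith only [key1, j0, j0']
        have hnn : 0 ≤ Lb * Kb * s ^ 2 := by positivity
        have j2 : (Lconst K L G) * (Lb * Kb * s ^ 3) ≤ (Kb * G / 2) * (Lb * Kb * s ^ 2) := by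
          nlinarith only [mul_le_mul_of_nonneg_right j1 hnn]
        have hLbG : Lb * G ≤ Lconst K L G := by
          rw [hLcdef]
          linarith only [sq_nonneg Kb]
        have hnn1 : 0 ≤ Kb ^ 2 * s ^ 2 := by positivity
        have j4 : (Lb * G / 2) * (Kb ^ 2 * s ^ 2)
            ≤ (Lconst K L G / 2) * (α * (1 - ρ) * θ * gn ^ 2 / 2) := by
          nlinarith only [mul_le_mul_of_nonneg_right hLbG hnn1,
            mul_le_mul_of_nonneg_left hterm1 (le_of_lt (half_pos hLc))]
        have j5 : (Lconst K L G) * (Lb * Kb * s ^ 3)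
            ≤ (Lconst K L G) * (α * (1 - ρ) * θ * gn ^ 2 / 4) := by
          calc (Lconst K L G) * (Lb * Kb * s ^ 3) ≤ (Kb * G / 2) * (Lb * Kb * s ^ 2) := j2
            _ = (Lb * G / 2) * (Kb ^ 2 * s ^ 2) := by ring
            _ ≤ (Lconst K L G / 2) * (α * (1 - ρ) * θ * gn ^ 2 / 2) := j4
            _ = (Lconst K L G) * (α * (1 - ρ) * θ * gn ^ 2 / 4) := by ring
        exact le_of_mul_le_mul_left j5 hLc
      have hE : α * ((Kb * b) * (Kb * s))
          + (Lb * s * s) * (Kb * s + 2 * gn)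
          ≤ (7/4) * (α * (1 - ρ) * θ * gn ^ 2) := by
        have e4 : α * ((Kb * b) * (Kb * s)) = Kb ^ 2 * s ^ 2 := by
          rw [hsdef]; ring
        have e5 : (Lb * s * s) * (Kb * s + 2 * gn)
            = Lb * Kb * s ^ 3 + 2 * Lb * gn * s ^ 2 := by
          rw [hsdef]; ring
        rw [e4, e5]
        linarith only [hterm1, hterm2, hterm3]
      have hdescent : 2 * α * (1 - ρ) * ⟪pbar, hessF f w (gradF f w)⟫
          ≤ -(2 * (α * (1 - ρ) * θ * gn ^ 2)) := by
        have hnn : (0:ℝ) ≤ 2 * α * (1 - ρ) := by positivity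
        have h8 := mul_le_mul_of_nonneg_left hcase hnn
        nlinarith only [h8]
      constructor
      · have hfin : ‖gy‖ ^ 2 ≤ gn ^ 2 + 2 * α * ρ * ⟪pbar, hessF f w (gradF f w)⟫ := by
          nlinarith only [hsub, err1, err2, hE, hdescent, hT0]
        exact hfin
      · have hnn : (0:ℝ) ≤ 2 * α * ρ := by positivity
        have h8 := mul_le_mul_of_nonneg_left hcase hnn
        nlinarith only [h8]
  refine ⟨claim1, ((claim1 τ hτ0 le_rfl).1).trans (claim1 τ hτ0 le_rfl).2, ?_⟩
  intro hgne
  have hgn : 0 < ‖gradF f w‖ := norm_pos_iff.mpr hgne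
  have hθ2φ : 2 * φ * θ ≤ Kb := hθK hgne
  have key3 : Kb ^ 2 ≤ Lconst K L G := by
    rw [hLcdef]; nlinarith [mul_nonneg hLb.le hG0]
  have hKsqrt : Kb ≤ Real.sqrt (Lconst K L G) := by
    apply Real.le_sqrt' hKb |>.mpr key3
  have hτρθ : 2 * τ * ρ * θ ≤ ρ * (1 - ρ) := by
    have heq : 2 * (2 * (1 - ρ) * φ ^ 2 * θ / Lconst K L G) * ρ * θ
        = (ρ * (1 - ρ) * (2 * φ * θ) ^ 2) / Lconst K L G := by
      field_simp
    rw [hτ, heq, div_le_iff₀ hLc]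
    have hsq : (2 * φ * θ) ^ 2 ≤ Kb ^ 2 := by
      have h0 : (0:ℝ) ≤ 2 * φ * θ := by positivity
      nlinarith [hθ2φ]
    have h1ρ : (0:ℝ) ≤ ρ * (1 - ρ) := by nlinarith
    nlinarith [mul_le_mul_of_nonneg_left (hsq.trans key3) h1ρ]
  refine ⟨?_, ?_, ?_⟩
  · rw [le_div_iff₀ hφ]
    calc θ * φ ≤ Kb / 2 := by nlinarith [hθ2φ]
      _ ≤ Real.sqrt (Lconst K L G) := by
          nlinarith [hKsqrt, Real.sqrt_nonneg (Lconst K L G)]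
  · nlinarith [hτρθ, sq_nonneg (ρ - 1/2)]
  · have : 0 < 2 * τ * ρ * θ := by positivity
    linarith
end

section
/- Let H and H_i be symmetric d×d real matrices, K_i > 0 with ‖H_i‖ ≤ K_i, φ > 0, γ > 0 and ν ∈ (0,1]. Let P be the orthogonal projection onto the range of H and let g ∈ ℝ^d. Suppose ‖Hq‖ ≥ γ‖q‖ for all q in the range of H, and ‖g − Pg‖² ≤ ((1−ν)/ν)·‖Pg‖². Then ⟨(H_i² + φ²I)⁻¹Hg, Hg⟩ ≥ (γ²ν/(K_i² + φ²))·‖g‖². -/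
open scoped RealInnerProductSpace

/-- **The key lower bound (23) for Case 3 of DINGO.** If `H` is symmetric with
`‖Hq‖ ≥ γ‖q‖` on its range, `Hᵢ` is symmetric with `‖Hᵢ‖ ≤ Kᵢ`, and `g` satisfies the
gradient–Hessian null-space property with constant `ν`, then
`⟨(Hᵢ² + φ²I)⁻¹Hg, Hg⟩ ≥ (γ²ν/(Kᵢ² + φ²))‖g‖²`. -/
theorem stmt_14 {d : ℕ}
    (H Hi : EuclideanSpace ℝ (Fin d) →L[ℝ] EuclideanSpace ℝ (Fin d))
    (hH : IsSelfAdjoint H) (hHi : IsSelfAdjoint Hi)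
    (Ki φ γ ν : ℝ) (hKi : 0 < Ki) (hHiK : ‖Hi‖ ≤ Ki) (hφ : 0 < φ)
    (hγ : 0 < γ) (hν0 : 0 < ν) (hν1 : ν ≤ 1)
    (g : EuclideanSpace ℝ (Fin d))
    (hreg : ∀ q ∈ LinearMap.range (H : EuclideanSpace ℝ (Fin d) →ₗ[ℝ] EuclideanSpace ℝ (Fin d)), γ * ‖q‖ ≤ ‖H q‖)
    (hns : ‖g - (Submodule.orthogonalProjectionOnto (LinearMap.range (H : EuclideanSpace ℝ (Fin d) →ₗ[ℝ] EuclideanSpace ℝ (Fin d))) g : EuclideanSpace ℝ (Fin d))‖ ^ 2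
      ≤ ((1 - ν) / ν)
        * ‖(Submodule.orthogonalProjectionOnto (LinearMap.range (H : EuclideanSpace ℝ (Fin d) →ₗ[ℝ] EuclideanSpace ℝ (Fin d))) g : EuclideanSpace ℝ (Fin d))‖ ^ 2) :
    γ ^ 2 * ν / (Ki ^ 2 + φ ^ 2) * ‖g‖ ^ 2
      ≤ ⟪Ring.inverse (Hi * Hi + φ ^ 2 • 1) (H g), H g⟫ := by
  let E := EuclideanSpace ℝ (Fin d)
  set K : Submodule ℝ E := LinearMap.range (H : E →ₗ[ℝ] E) with hK
  set p : E := (K.orthogonalProjectionOnto g : E) with hp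
  set A : E →L[ℝ] E := Hi * Hi + φ ^ 2 • 1 with hA
  -- self-adjointness: ⟪Hi x, y⟫ = ⟪x, Hi y⟫, same for H
  have hHi_inner : ∀ x y : E, ⟪Hi x, y⟫ = ⟪x, Hi y⟫ := by
    intro x y
    rw [← hHi.adjoint_eq, ContinuousLinearMap.adjoint_inner_left, hHi.adjoint_eq]
  have hH_inner : ∀ x y : E, ⟪H x, y⟫ = ⟪x, H y⟫ := by
    intro x y
    rw [← hH.adjoint_eq, ContinuousLinearMap.adjoint_inner_left, hH.adjoint_eq]
  -- ⟪A x, x⟫ = ‖Hi x‖² + φ²‖x‖²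
  have hAval : ∀ x : E, A x = Hi (Hi x) + φ ^ 2 • x := by
    intro x; simp [hA, ContinuousLinearMap.add_apply, ContinuousLinearMap.mul_apply]
  have hAinner : ∀ x : E, ⟪A x, x⟫ = ‖Hi x‖ ^ 2 + φ ^ 2 * ‖x‖ ^ 2 := by
    intro x
    rw [hAval, inner_add_left, inner_smul_left, hHi_inner (Hi x) x,
      real_inner_self_eq_norm_sq, real_inner_self_eq_norm_sq]
    simp
  -- A is injective, hence bijective, hence a unit
  have hAinj : Function.Injective A := by
    intro x y hxy
    rw [← sub_eq_zero, ← norm_eq_zero]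
    have h0 : A (x - y) = 0 := by rw [map_sub, hxy, sub_self]
    have := hAinner (x - y)
    rw [h0, inner_zero_left] at this
    have h2 : ‖x - y‖ ^ 2 = 0 := by
      nlinarith [sq_nonneg ‖Hi (x - y)‖, sq_nonneg ‖x - y‖, pow_pos hφ 2]
    exact (pow_eq_zero_iff two_ne_zero).mp h2
  have hAbij : Function.Bijective A :=
    ⟨hAinj, (LinearMap.injective_iff_surjective (f := (A : E →ₗ[ℝ] E))).mp hAinj⟩
  have hAunit : IsUnit A := ContinuousLinearMap.isUnit_iff_bijective.mpr hAbij
  -- y := A⁻¹ (H g)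
  set x : E := H g with hx
  set y : E := Ring.inverse A x with hy
  have hAy : A y = x := by
    rw [hy, ← ContinuousLinearMap.mul_apply, Ring.mul_inverse_cancel A hAunit,
      ContinuousLinearMap.one_apply]
  -- key operator bound: ⟪y, x⟫ ≥ ‖x‖² / (Ki² + φ²)
  have hKφ : 0 < Ki ^ 2 + φ ^ 2 := by positivity
  have hyx : ‖x‖ ^ 2 / (Ki ^ 2 + φ ^ 2) ≤ ⟪y, x⟫ := by
    have h1 : ⟪y, x⟫ = ‖Hi y‖ ^ 2 + φ ^ 2 * ‖y‖ ^ 2 := by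
      rw [← hAy, real_inner_comm, hAinner]
    have h2 : ‖x‖ ≤ Ki * ‖Hi y‖ + φ ^ 2 * ‖y‖ := by
      rw [← hAy, hAval]
      refine le_trans (norm_add_le _ _) ?_
      gcongr
      · exact le_trans (Hi.le_opNorm _) (by gcongr)
      · rw [norm_smul]; simp [abs_of_pos (by positivity : (0:ℝ) < φ ^ 2)]
    rw [h1, div_le_iff₀ hKφ]
    nlinarith [norm_nonneg x, norm_nonneg (Hi y), norm_nonneg y,
      sq_nonneg (φ * ‖Hi y‖ - Ki * φ * ‖y‖), sq_nonneg ‖x‖]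
  -- H g = H p
  have hHg_eq : H g = H p := by
    have hmem : g - p ∈ Kᗮ := K.sub_starProjection_mem_orthogonal g
    have hz : H (g - p) = 0 := by
      have hmem' := (Submodule.mem_orthogonal _ _).mp hmem
      have h0 : ⟪H (g - p), H (g - p)⟫ = 0 := by
        rw [hH_inner, real_inner_comm]
        exact hmem' (H (H (g - p))) ⟨H (g - p), rfl⟩
      simpa using (inner_self_eq_zero (𝕜 := ℝ)).mp h0
    have h5 := map_sub H g p
    rw [hz] at h5
    exact sub_eq_zero.mp h5.symm
  -- γ‖p‖ ≤ ‖H g‖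
  have hreg' : γ * ‖p‖ ≤ ‖x‖ := by
    rw [hx, hHg_eq]
    exact hreg p (K.orthogonalProjectionOnto g).2
  -- ν‖g‖² ≤ ‖p‖²
  have hpyth : ‖g‖ ^ 2 = ‖p‖ ^ 2 + ‖g - p‖ ^ 2 := by
    have hgp : p + (g - p) = g := by abel
    have horth : ⟪p, g - p⟫ = 0 :=
      (K.sub_starProjection_mem_orthogonal g) p (K.orthogonalProjectionOnto g).2
    have h6 := norm_add_sq_real p (g - p)
    rw [hgp, horth] at h6
    linarith
  have hνg : ν * ‖g‖ ^ 2 ≤ ‖p‖ ^ 2 := by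
    have h3 : ν * ‖g - p‖ ^ 2 ≤ (1 - ν) * ‖p‖ ^ 2 := by
      have := mul_le_mul_of_nonneg_left hns hν0.le
      calc ν * ‖g - p‖ ^ 2 ≤ ν * ((1 - ν) / ν * ‖p‖ ^ 2) := this
      _ = (1 - ν) * ‖p‖ ^ 2 := by field_simp
    calc ν * ‖g‖ ^ 2 = ν * ‖p‖ ^ 2 + ν * ‖g - p‖ ^ 2 := by rw [hpyth]; ring
    _ ≤ ν * ‖p‖ ^ 2 + (1 - ν) * ‖p‖ ^ 2 := by linarith
    _ = ‖p‖ ^ 2 := by ring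
  -- combine
  have hxg : γ ^ 2 * ν * ‖g‖ ^ 2 ≤ ‖x‖ ^ 2 := by
    have hp0 : (0:ℝ) ≤ ‖p‖ := norm_nonneg _
    have hx0 : (0:ℝ) ≤ ‖x‖ := norm_nonneg _
    have hg0 : (0:ℝ) ≤ ‖g‖ := norm_nonneg _
    revert hreg' hνg hp0 hx0 hg0
    generalize ‖p‖ = a
    generalize ‖x‖ = b
    generalize ‖g‖ = c
    intro hreg' hνg hp0 hx0 hg0
    have h1 : γ ^ 2 * (ν * c ^ 2) ≤ γ ^ 2 * a ^ 2 :=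
      mul_le_mul_of_nonneg_left hνg (sq_nonneg γ)
    have h2 : (γ * a) * (γ * a) ≤ b * b :=
      mul_self_le_mul_self (by positivity) hreg'
    linarith [h1, h2]
  refine le_trans ?_ hyx
  rw [div_mul_eq_mul_div]
  exact div_le_div_of_nonneg_right hxg hKφ.le
end
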